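/- arXiv:1910.12499 — 3 statements merged into one kernel-verified Lean document; each statement's English description precedes it below -/
import Mathlib

section
/- Let ρ∈(1/4,1/2). Then, as h→0⁺, λ₁(𝓗_h) = −1 − h^{1/2} − (1/2)h + o(h). -/
open MeasureTheory Set Filter

noncomputable section

/-- The lowest Rayleigh quotient `λ₁(𝓗^{b,ρ}_{m,h})` of the fiber operator with angular
momentum `m` on `(0,δ)`, `δ = h^{ρ-1/2}`, in the weighted space
`L²((0,δ), (1-h^{1/2}τ)dτ)`, with Robin condition at `0` (encoded by the boundary term
`-|u(0)|²`) and Dirichlet condition at `δ`. -/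
def fiberLam (b ρ h : ℝ) (m : ℤ) : ℝ :=
  sInf { r : ℝ | ∃ u : ℝ → ℂ, ContDiff ℝ (⊤ : ℕ∞) u ∧ u (h ^ (ρ - 1 / 2)) = 0 ∧
    0 < (∫ τ in (0 : ℝ)..(h ^ (ρ - 1 / 2)), ‖u τ‖ ^ 2 * (1 - Real.sqrt h * τ)) ∧
    r = ((∫ τ in (0 : ℝ)..(h ^ (ρ - 1 / 2)),
            (‖deriv u τ‖ ^ 2
              + h / (1 - Real.sqrt h * τ) ^ 2
                * ((m : ℝ) - b / 2 * (1 - Real.sqrt h * τ) ^ 2) ^ 2 * ‖u τ‖ ^ 2)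
              * (1 - Real.sqrt h * τ))
          - ‖u 0‖ ^ 2)
        / ∫ τ in (0 : ℝ)..(h ^ (ρ - 1 / 2)), ‖u τ‖ ^ 2 * (1 - Real.sqrt h * τ) }

/-- The lowest Rayleigh quotient `λ₁(𝓗_h)` of the weighted 1D Laplacian
`𝓗_h = -d²/dτ² + h^{1/2}(1-h^{1/2}τ)^{-1} d/dτ` on `(0,δ)`, `δ = h^{ρ-1/2}`, in the weighted
space `L²((0,δ), (1-h^{1/2}τ)dτ)`, with Robin condition at `0` and Dirichlet condition
at `δ`. -/
def lamH (ρ h : ℝ) : ℝ :=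
  sInf { r : ℝ | ∃ u : ℝ → ℂ, ContDiff ℝ (⊤ : ℕ∞) u ∧ u (h ^ (ρ - 1 / 2)) = 0 ∧
    0 < (∫ τ in (0 : ℝ)..(h ^ (ρ - 1 / 2)), ‖u τ‖ ^ 2 * (1 - Real.sqrt h * τ)) ∧
    r = ((∫ τ in (0 : ℝ)..(h ^ (ρ - 1 / 2)), ‖deriv u τ‖ ^ 2 * (1 - Real.sqrt h * τ))
          - ‖u 0‖ ^ 2)
        / ∫ τ in (0 : ℝ)..(h ^ (ρ - 1 / 2)), ‖u τ‖ ^ 2 * (1 - Real.sqrt h * τ) }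

lemma norm_sq_complex (z : ℂ) : ‖z‖^2 = z.re^2 + z.im^2 := by
  rw [Complex.sq_norm, Complex.normSq_apply]; ring

lemma lemA (h δ : ℝ) (u : ℝ → ℂ) (hu : ContDiff ℝ (⊤ : ℕ∞) u) (huδ : u δ = 0) :
    (∫ τ in (0:ℝ)..δ, ‖deriv u τ‖^2 * (1 - Real.sqrt h * τ)) - ‖u 0‖^2
    = (∫ τ in (0:ℝ)..δ, ‖deriv u τ - (((-1 + h*τ/2 : ℝ)) : ℂ) * u τ‖^2 * (1 - Real.sqrt h * τ))
      - ∫ τ in (0:ℝ)..δ,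
          (Real.sqrt h + h/2 - Real.sqrt h*h*τ + (-1 + h*τ/2)^2 * (1 - Real.sqrt h*τ)) * ‖u τ‖^2 := by
  set s := Real.sqrt h with hs
  have hud : Differentiable ℝ u := hu.differentiable (by simp)
  have hcu : Continuous u := hud.continuous
  have hcud : Continuous (deriv u) := hu.continuous_deriv (by simp)
  have hre : ∀ τ : ℝ, HasDerivAt (fun t => (u t).re) ((deriv u τ).re) τ := fun τ =>
    Complex.reCLM.hasFDerivAt.comp_hasDerivAt τ (hud τ).hasDerivAt
  have him : ∀ τ : ℝ, HasDerivAt (fun t => (u t).im) ((deriv u τ).im) τ := fun τ =>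
    Complex.imCLM.hasFDerivAt.comp_hasDerivAt τ (hud τ).hasDerivAt
  have hfun : (fun t => ‖u t‖^2) = (fun t => (u t).re^2 + (u t).im^2) :=
    funext fun t => norm_sq_complex _
  have hp : ∀ τ : ℝ, HasDerivAt (fun t => ‖u t‖^2)
      (2*((u τ).re*(deriv u τ).re + (u τ).im*(deriv u τ).im)) τ := by
    intro τ
    rw [hfun]
    have := ((hre τ).mul (hre τ)).add ((him τ).mul (him τ))
    have hf : (fun t => (u t).re^2 + (u t).im^2)
        = ((fun t => (u t).re) * fun t => (u t).re) + (fun t => (u t).im) * fun t => (u t).im := by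
      ext t; simp only [Pi.add_apply, Pi.mul_apply]; ring
    rw [hf]; exact this.congr_deriv (by ring)
  have hG : ∀ τ : ℝ, HasDerivAt (fun t => (-1 + h*t/2)*(1 - s*t)) (s + h/2 - s*h*τ) τ := by
    intro τ
    have h1 : HasDerivAt (fun t : ℝ => -1 + h*t/2) (h/2) τ := by
      have := (((hasDerivAt_id τ).const_mul h).div_const 2).const_add (-1 : ℝ)
      exact this.congr_deriv (by ring)
    have h2 : HasDerivAt (fun t : ℝ => 1 - s*t) (-s) τ := by
      have := ((hasDerivAt_id τ).const_mul s).const_sub (1:ℝ)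
      exact this.congr_deriv (by ring)
    have := h1.mul h2
    exact this.congr_deriv (by ring)
  have hF : ∀ τ : ℝ, HasDerivAt (fun t => ((-1 + h*t/2)*(1 - s*t)) * ‖u t‖^2)
      ((s + h/2 - s*h*τ)*‖u τ‖^2
        + ((-1 + h*τ/2)*(1 - s*τ))*(2*((u τ).re*(deriv u τ).re + (u τ).im*(deriv u τ).im))) τ :=
    fun τ => (hG τ).mul (hp τ)
  have hcont2 : Continuous (fun τ => (s + h/2 - s*h*τ)*‖u τ‖^2
      + ((-1 + h*τ/2)*(1 - s*τ))*(2*((u τ).re*(deriv u τ).re + (u τ).im*(deriv u τ).im))) := by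
    fun_prop
  have hibp : (∫ τ in (0:ℝ)..δ, ((s + h/2 - s*h*τ)*‖u τ‖^2
      + ((-1 + h*τ/2)*(1 - s*τ))*(2*((u τ).re*(deriv u τ).re + (u τ).im*(deriv u τ).im))))
      = ‖u 0‖^2 := by
    rw [intervalIntegral.integral_eq_sub_of_hasDerivAt (fun τ _ => hF τ)
      (hcont2.intervalIntegrable 0 δ)]
    simp [huδ]
  have key : ∀ τ : ℝ, ‖deriv u τ - (((-1 + h*τ/2 : ℝ)) : ℂ) * u τ‖^2 * (1 - s*τ)
      - (s + h/2 - s*h*τ + (-1 + h*τ/2)^2 * (1 - s*τ)) * ‖u τ‖^2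
    = ‖deriv u τ‖^2 * (1 - s*τ)
      - ((s + h/2 - s*h*τ)*‖u τ‖^2
        + ((-1 + h*τ/2)*(1 - s*τ))*(2*((u τ).re*(deriv u τ).re + (u τ).im*(deriv u τ).im))) := by
    intro τ
    have e1 : ‖deriv u τ - (((-1 + h*τ/2 : ℝ)) : ℂ) * u τ‖^2
        = ((deriv u τ).re - (-1 + h*τ/2)*(u τ).re)^2
          + ((deriv u τ).im - (-1 + h*τ/2)*(u τ).im)^2 := by
      rw [norm_sq_complex]
      simp [Complex.sub_re, Complex.sub_im, Complex.mul_re, Complex.mul_im]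
    rw [e1, norm_sq_complex (deriv u τ), norm_sq_complex (u τ)]; ring
  have i1 : IntervalIntegrable (fun τ => ‖deriv u τ - (((-1 + h*τ/2 : ℝ)) : ℂ) * u τ‖^2 * (1 - s*τ))
      volume 0 δ := by
    apply Continuous.intervalIntegrable; fun_prop
  have i2 : IntervalIntegrable
      (fun τ => (s + h/2 - s*h*τ + (-1 + h*τ/2)^2 * (1 - s*τ)) * ‖u τ‖^2) volume 0 δ := by
    apply Continuous.intervalIntegrable; fun_prop
  have i3 : IntervalIntegrable (fun τ => ‖deriv u τ‖^2 * (1 - s*τ)) volume 0 δ := by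
    apply Continuous.intervalIntegrable; fun_prop
  rw [← intervalIntegral.integral_sub i1 i2]
  have : (∫ τ in (0:ℝ)..δ, (‖deriv u τ - (((-1 + h*τ/2 : ℝ)) : ℂ) * u τ‖^2 * (1 - s*τ)
      - (s + h/2 - s*h*τ + (-1 + h*τ/2)^2 * (1 - s*τ)) * ‖u τ‖^2))
      = ∫ τ in (0:ℝ)..δ, (‖deriv u τ‖^2 * (1 - s*τ)
      - ((s + h/2 - s*h*τ)*‖u τ‖^2
        + ((-1 + h*τ/2)*(1 - s*τ))*(2*((u τ).re*(deriv u τ).re + (u τ).im*(deriv u τ).im)))) := by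
    exact intervalIntegral.integral_congr fun τ _ => key τ
  rw [this, intervalIntegral.integral_sub i3 ((hcont2).intervalIntegrable 0 δ), hibp]

lemma lemB (s h τ K A c : ℝ) (hs0 : 0 ≤ s) (hs2 : s^2 = h) (hτ : 0 ≤ τ)
    (ha : s*τ ≤ c) (hc : c ≤ 1/2) (hK1 : s*h*τ^2 ≤ K) (hK2 : h^2*τ^2 ≤ K)
    (hA1 : s*h*τ ≤ A) (hA2 : s*h^2*τ^3 ≤ A) :
    (1+s+h/2-2*A) * (1-s*τ) ≤ s + h/2 - s*h*τ + (-1 + h*τ/2)^2 * (1 - s*τ)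
    ∧ s + h/2 - s*h*τ + (-1 + h*τ/2)^2 * (1 - s*τ) ≤ (1+s+h/2+3*K) * (1-s*τ) := by
  have h0 : 0 ≤ h := hs2 ▸ sq_nonneg s
  have hw : (1:ℝ)/2 ≤ 1 - s*τ := by linarith
  have hdiff : s + h/2 - s*h*τ + (-1 + h*τ/2)^2 * (1 - s*τ) - (1+s+h/2)*(1-s*τ)
      = -s*h*τ/2 + s*h*τ^2 + h^2*τ^2/4 - s*h^2*τ^3/4 := by
    linear_combination τ * hs2
  have hK0 : 0 ≤ K := le_trans (by positivity) hK2
  have hA0 : 0 ≤ A := le_trans (by positivity) hA1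
  have hKw : 3*K*(1/2) ≤ 3*K*(1-s*τ) := by nlinarith
  have hAw : 2*A*(1/2) ≤ 2*A*(1-s*τ) := by nlinarith
  have hn1 : 0 ≤ s*h*τ := by positivity
  have hn2 : 0 ≤ s*h^2*τ^3 := by positivity
  have hn3 : 0 ≤ s*h*τ^2 := by positivity
  have hn4 : 0 ≤ h^2*τ^2 := by positivity
  constructor <;> nlinarith [hdiff]

lemma lower_bound (h δ CU : ℝ) (h0δ : 0 ≤ δ)
    (hw0 : ∀ τ ∈ Icc (0:ℝ) δ, 0 ≤ 1 - Real.sqrt h * τ)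
    (hGpUB : ∀ τ ∈ Icc (0:ℝ) δ,
      Real.sqrt h + h/2 - Real.sqrt h*h*τ + (-1 + h*τ/2)^2 * (1 - Real.sqrt h*τ)
        ≤ CU * (1 - Real.sqrt h * τ))
    (u : ℝ → ℂ) (hu : ContDiff ℝ (⊤ : ℕ∞) u) (huδ : u δ = 0)
    (hD : 0 < ∫ τ in (0:ℝ)..δ, ‖u τ‖^2 * (1 - Real.sqrt h * τ)) :
    -CU ≤ ((∫ τ in (0:ℝ)..δ, ‖deriv u τ‖^2 * (1 - Real.sqrt h * τ)) - ‖u 0‖^2)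
      / ∫ τ in (0:ℝ)..δ, ‖u τ‖^2 * (1 - Real.sqrt h * τ) := by
  rw [le_div_iff₀ hD]
  have hcu : Continuous u := (hu.differentiable (by simp)).continuous
  have hcud : Continuous (deriv u) := hu.continuous_deriv (by simp)
  have heq := lemA h δ u hu huδ
  have hI2 : 0 ≤ ∫ τ in (0:ℝ)..δ,
      ‖deriv u τ - (((-1 + h*τ/2 : ℝ)) : ℂ) * u τ‖^2 * (1 - Real.sqrt h * τ) := by
    apply intervalIntegral.integral_nonneg h0δ
    intro τ hτ
    exact mul_nonneg (sq_nonneg _) (hw0 τ hτ)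
  have hI3 : (∫ τ in (0:ℝ)..δ,
      (Real.sqrt h + h/2 - Real.sqrt h*h*τ + (-1 + h*τ/2)^2 * (1 - Real.sqrt h*τ)) * ‖u τ‖^2)
      ≤ CU * ∫ τ in (0:ℝ)..δ, ‖u τ‖^2 * (1 - Real.sqrt h * τ) := by
    rw [← intervalIntegral.integral_const_mul]
    apply intervalIntegral.integral_mono_on h0δ
    · apply Continuous.intervalIntegrable; fun_prop
    · apply Continuous.intervalIntegrable; fun_prop
    · intro τ hτ
      have h1 := hGpUB τ hτ
      have hp0 : (0:ℝ) ≤ ‖u τ‖^2 := sq_nonneg _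
      calc (Real.sqrt h + h/2 - Real.sqrt h*h*τ + (-1 + h*τ/2)^2 * (1 - Real.sqrt h*τ)) * ‖u τ‖^2
          ≤ (CU * (1 - Real.sqrt h * τ)) * ‖u τ‖^2 := mul_le_mul_of_nonneg_right h1 hp0
        _ = CU * (‖u τ‖^2 * (1 - Real.sqrt h * τ)) := by ring
  linarith

def trF (h δ τ : ℝ) : ℝ := Real.exp (h*τ^2/4) * (Real.exp (-τ) - Real.exp (τ - 2*δ))
def trdF (h δ τ : ℝ) : ℝ :=
  Real.exp (h*τ^2/4) * ((h*τ/2) * (Real.exp (-τ) - Real.exp (τ - 2*δ))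
    - Real.exp (-τ) - Real.exp (τ - 2*δ))

lemma trF_contDiff (h δ : ℝ) : ContDiff ℝ (⊤ : ℕ∞) (trF h δ) := by
  unfold trF
  exact (Real.contDiff_exp.comp ((contDiff_const.mul (contDiff_id.pow 2)).div_const 4)).mul
    ((Real.contDiff_exp.comp contDiff_id.neg).sub
      (Real.contDiff_exp.comp (contDiff_id.sub contDiff_const)))

lemma trF_cont (h δ : ℝ) : Continuous (trF h δ) := (trF_contDiff h δ).continuous

lemma trdF_cont (h δ : ℝ) : Continuous (trdF h δ) := by
  unfold trdF
  have e : Continuous fun τ : ℝ => Real.exp (h*τ^2/4) :=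
    Real.continuous_exp.comp (by fun_prop)
  fun_prop

lemma trF_hasDeriv (h δ τ : ℝ) : HasDerivAt (trF h δ) (trdF h δ τ) τ := by
  have e1 : HasDerivAt (fun t : ℝ => h*t^2/4) (h*τ/2) τ := by
    have := ((hasDerivAt_pow 2 τ).const_mul h).div_const 4
    exact this.congr_deriv (by simp only [Nat.cast_ofNat, show (2:ℕ) - 1 = 1 from rfl, pow_one]; ring)
  have e2 : HasDerivAt (fun t : ℝ => Real.exp (-t)) (-Real.exp (-τ)) τ := by
    have := ((hasDerivAt_id τ).neg).exp
    convert this using 1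
    all_goals simp
  have e3 : HasDerivAt (fun t : ℝ => Real.exp (t - 2*δ)) (Real.exp (τ - 2*δ)) τ := by
    have := ((hasDerivAt_id τ).sub_const (2*δ)).exp
    convert this using 1
    all_goals simp
  have := e1.exp.mul (e2.sub e3)
  exact this.congr_deriv (by unfold trdF; simp only [Pi.sub_apply]; ring)

lemma hnorm_real (r : ℝ) : ‖((r : ℝ) : ℂ)‖^2 = r^2 := by
  rw [Complex.norm_real, Real.norm_eq_abs, sq_abs]

lemma exp_half_lt_two : Real.exp (1/2) < 2 := by
  have l1 : Real.exp 1 < 2.7182818286 := Real.exp_one_lt_d9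
  have h2 : Real.exp (1/2) * Real.exp (1/2) = Real.exp 1 := by
    rw [← Real.exp_add]; norm_num
  nlinarith [Real.exp_pos (1/2 : ℝ)]

lemma exp_diff_ge : (1:ℝ)/4 ≤ Real.exp (-1) - Real.exp (-3) := by
  have l1 : Real.exp 1 < 2.7182818286 := Real.exp_one_lt_d9
  have l2 : (2.7182818283 : ℝ) < Real.exp 1 := Real.exp_one_gt_d9
  set x := Real.exp 1 with hx
  have hp : (0:ℝ) < x := Real.exp_pos 1
  have e1 : Real.exp (-1 : ℝ) = x⁻¹ := by rw [← Real.exp_neg]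
  have e3 : Real.exp (-3 : ℝ) = x⁻¹^3 := by
    rw [← Real.exp_neg, ← Real.exp_nat_mul]; norm_num
  rw [e1, e3, inv_pow]
  have hkey : x⁻¹ - (x^3)⁻¹ = (x^2 - 1)/x^3 := by
    field_simp
  rw [hkey, le_div_iff₀ (by positivity)]
  nlinarith

set_option maxHeartbeats 1000000 in
lemma trial_bound (h δ CL : ℝ) (hh : 0 < h) (hh1 : h ≤ 1/4) (hδ2 : 2 ≤ δ)
    (hsδ : Real.sqrt h * δ ≤ 1/2) (hhδ2 : h * δ^2 ≤ 1)
    (hGpLB : ∀ τ ∈ Icc (0:ℝ) δ,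
      CL * (1 - Real.sqrt h * τ) ≤
        Real.sqrt h + h/2 - Real.sqrt h*h*τ + (-1 + h*τ/2)^2 * (1 - Real.sqrt h*τ)) :
    ∃ u : ℝ → ℂ, ContDiff ℝ (⊤ : ℕ∞) u ∧ u δ = 0 ∧
      0 < (∫ τ in (0:ℝ)..δ, ‖u τ‖^2 * (1 - Real.sqrt h * τ)) ∧
      ((∫ τ in (0:ℝ)..δ, ‖deriv u τ‖^2 * (1 - Real.sqrt h * τ)) - ‖u 0‖^2)
        / (∫ τ in (0:ℝ)..δ, ‖u τ‖^2 * (1 - Real.sqrt h * τ))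
      ≤ -CL + 128 * Real.exp (-(2*δ)) := by
  have hs0 : 0 ≤ Real.sqrt h := Real.sqrt_nonneg h
  have hs2 : Real.sqrt h ^ 2 = h := Real.sq_sqrt hh.le
  have hs12 : Real.sqrt h ≤ 1/2 := by nlinarith
  have h0δ : (0:ℝ) ≤ δ := by linarith
  set u : ℝ → ℂ := fun τ => ((trF h δ τ : ℝ) : ℂ) with hudef
  have hu : ContDiff ℝ (⊤ : ℕ∞) u := (Complex.ofRealCLM.contDiff).comp (trF_contDiff h δ)
  have huδ : u δ = 0 := by
    have hδδ : trF h δ δ = 0 := by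
      unfold trF
      have : δ - 2*δ = -δ := by ring
      rw [this, sub_self, mul_zero]
    simp [hudef, hδδ]
  have huder : ∀ τ, deriv u τ = ((trdF h δ τ : ℝ) : ℂ) := fun τ =>
    ((trF_hasDeriv h δ τ).ofReal_comp).deriv
  have hwub : ∀ τ ∈ Icc (0:ℝ) δ, (1:ℝ)/2 ≤ 1 - Real.sqrt h * τ := by
    intro τ hτ
    have : Real.sqrt h * τ ≤ Real.sqrt h * δ := mul_le_mul_of_nonneg_left hτ.2 hs0
    linarith
  -- lower bound for denominator
  have hDpt : ∀ τ ∈ Icc (0:ℝ) 1, (1:ℝ)/32 ≤ ‖u τ‖^2 * (1 - Real.sqrt h * τ) := by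
    intro τ hτ
    have hτδ : τ ∈ Icc (0:ℝ) δ := ⟨hτ.1, le_trans hτ.2 (by linarith)⟩
    have hE : 1 ≤ Real.exp (h*τ^2/4) := Real.one_le_exp (by positivity)
    have hb1 : Real.exp (-1) ≤ Real.exp (-τ) := Real.exp_le_exp.mpr (by linarith [hτ.2])
    have hb2 : Real.exp (τ - 2*δ) ≤ Real.exp (-3) :=
      Real.exp_le_exp.mpr (by linarith [hτ.2])
    have hb : (1:ℝ)/4 ≤ Real.exp (-τ) - Real.exp (τ - 2*δ) := by
      linarith [exp_diff_ge]
    have hf14 : (1:ℝ)/4 ≤ trF h δ τ := by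
      unfold trF; nlinarith
    have hw := hwub τ hτδ
    have : ‖u τ‖^2 = trF h δ τ^2 := hnorm_real _
    rw [this]
    nlinarith
  have hcont_pw : Continuous fun τ => ‖u τ‖^2 * (1 - Real.sqrt h * τ) := by
    have : Continuous u := hu.continuous
    fun_prop
  have hint_pw : ∀ a b : ℝ, IntervalIntegrable (fun τ => ‖u τ‖^2 * (1 - Real.sqrt h * τ)) volume a b :=
    fun a b => hcont_pw.intervalIntegrable a b
  have hD1 : (1:ℝ)/32 ≤ ∫ τ in (0:ℝ)..1, ‖u τ‖^2 * (1 - Real.sqrt h * τ) := by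
    have hconst : (1:ℝ)/32 = ∫ τ in (0:ℝ)..1, (1/32 : ℝ) := by simp
    rw [hconst]
    exact intervalIntegral.integral_mono_on (by norm_num) (intervalIntegrable_const)
      (hint_pw 0 1) hDpt
  have hD2 : 0 ≤ ∫ τ in (1:ℝ)..δ, ‖u τ‖^2 * (1 - Real.sqrt h * τ) := by
    apply intervalIntegral.integral_nonneg (by linarith)
    intro τ hτ
    have hw := hwub τ ⟨le_trans zero_le_one hτ.1, hτ.2⟩
    have := sq_nonneg ‖u τ‖
    nlinarith
  have hsplit : (∫ τ in (0:ℝ)..δ, ‖u τ‖^2 * (1 - Real.sqrt h * τ))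
      = (∫ τ in (0:ℝ)..1, ‖u τ‖^2 * (1 - Real.sqrt h * τ))
        + ∫ τ in (1:ℝ)..δ, ‖u τ‖^2 * (1 - Real.sqrt h * τ) :=
    (intervalIntegral.integral_add_adjacent_intervals (hint_pw 0 1) (hint_pw 1 δ)).symm
  have hD32 : (1:ℝ)/32 ≤ ∫ τ in (0:ℝ)..δ, ‖u τ‖^2 * (1 - Real.sqrt h * τ) := by
    rw [hsplit]; linarith
  have hD : 0 < ∫ τ in (0:ℝ)..δ, ‖u τ‖^2 * (1 - Real.sqrt h * τ) := by linarith
  refine ⟨u, hu, huδ, hD, ?_⟩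
  rw [div_le_iff₀ hD]
  have heq := lemA h δ u hu huδ
  -- I2 bound
  have hI2eq : (∫ τ in (0:ℝ)..δ, ‖deriv u τ - (((-1 + h*τ/2 : ℝ)) : ℂ) * u τ‖^2 * (1 - Real.sqrt h * τ))
      = ∫ τ in (0:ℝ)..δ, (trdF h δ τ - (-1 + h*τ/2) * trF h δ τ)^2 * (1 - Real.sqrt h * τ) := by
    apply intervalIntegral.integral_congr
    intro τ _
    dsimp only
    rw [huder τ]
    show ‖((trdF h δ τ : ℝ) : ℂ) - ((-1 + h*τ/2 : ℝ) : ℂ) * ((trF h δ τ : ℝ) : ℂ)‖^2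
        * (1 - Real.sqrt h * τ) = _
    have : ((trdF h δ τ : ℝ) : ℂ) - ((-1 + h*τ/2 : ℝ) : ℂ) * ((trF h δ τ : ℝ) : ℂ)
        = (((trdF h δ τ - (-1 + h*τ/2) * trF h δ τ : ℝ)) : ℂ) := by push_cast; ring
    rw [this, hnorm_real]
  have hI2pt : ∀ τ ∈ Icc (0:ℝ) δ,
      (trdF h δ τ - (-1 + h*τ/2) * trF h δ τ)^2 * (1 - Real.sqrt h * τ)
      ≤ 8 * Real.exp (2*τ - 4*δ) := by
    intro τ hτ
    have hdiff : trdF h δ τ - (-1 + h*τ/2) * trF h δ τ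
        = -2 * Real.exp (h*τ^2/4) * Real.exp (τ - 2*δ) := by
      unfold trF trdF; ring
    rw [hdiff]
    have hE2 : Real.exp (h*τ^2/4)^2 = Real.exp (h*τ^2/2) := by
      rw [sq, ← Real.exp_add]; congr 1; ring
    have hP2 : Real.exp (τ - 2*δ)^2 = Real.exp (2*τ - 4*δ) := by
      rw [sq, ← Real.exp_add]; congr 1; ring
    have hexpand : (-2 * Real.exp (h*τ^2/4) * Real.exp (τ - 2*δ))^2 * (1 - Real.sqrt h * τ)
        = 4 * Real.exp (h*τ^2/2) * Real.exp (2*τ - 4*δ) * (1 - Real.sqrt h * τ) := by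
      rw [← hE2, ← hP2]; ring
    rw [hexpand]
    have hτ2 : τ^2 ≤ δ^2 := pow_le_pow_left₀ hτ.1 hτ.2 2
    have harg : h*τ^2/2 ≤ 1/2 := by nlinarith
    have hX : Real.exp (h*τ^2/2) ≤ 2 :=
      le_trans (Real.exp_le_exp.mpr harg) exp_half_lt_two.le
    have hw1 : 1 - Real.sqrt h * τ ≤ 1 := by nlinarith [mul_nonneg hs0 hτ.1]
    have hw0 : 0 ≤ 1 - Real.sqrt h * τ := by linarith [hwub τ hτ]
    have hPpos : 0 < Real.exp (2*τ - 4*δ) := Real.exp_pos _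
    have hXP : 0 ≤ 4 * Real.exp (h*τ^2/2) * Real.exp (2*τ - 4*δ) := by positivity
    have t1 : 4 * Real.exp (h*τ^2/2) * Real.exp (2*τ - 4*δ) * (1 - Real.sqrt h * τ)
        ≤ 4 * Real.exp (h*τ^2/2) * Real.exp (2*τ - 4*δ) := mul_le_of_le_one_right hXP hw1
    have h4X : 4 * Real.exp (h*τ^2/2) ≤ 8 := by linarith
    have t2 : (4 * Real.exp (h*τ^2/2)) * Real.exp (2*τ - 4*δ) ≤ 8 * Real.exp (2*τ - 4*δ) :=
      mul_le_mul_of_nonneg_right h4X hPpos.le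
    linarith
  have hanti : ∀ τ : ℝ, HasDerivAt (fun t => 4 * Real.exp (2*t - 4*δ))
      (8 * Real.exp (2*τ - 4*δ)) τ := by
    intro τ
    have := ((((hasDerivAt_id τ).const_mul 2).sub_const (4*δ)).exp).const_mul 4
    exact this.congr_deriv (by simp only [id_eq]; ring)
  have hintexp : (∫ τ in (0:ℝ)..δ, 8 * Real.exp (2*τ - 4*δ))
      = 4 * Real.exp (2*δ - 4*δ) - 4 * Real.exp (2*0 - 4*δ) := by
    rw [intervalIntegral.integral_eq_sub_of_hasDerivAt (fun τ _ => hanti τ)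
      ((by fun_prop : Continuous fun τ : ℝ => 8 * Real.exp (2*τ - 4*δ)).intervalIntegrable 0 δ)]
  have hI2bound : (∫ τ in (0:ℝ)..δ, ‖deriv u τ - (((-1 + h*τ/2 : ℝ)) : ℂ) * u τ‖^2 * (1 - Real.sqrt h * τ))
      ≤ 4 * Real.exp (-(2*δ)) := by
    rw [hI2eq]
    have step : (∫ τ in (0:ℝ)..δ, (trdF h δ τ - (-1 + h*τ/2) * trF h δ τ)^2 * (1 - Real.sqrt h * τ))
        ≤ ∫ τ in (0:ℝ)..δ, 8 * Real.exp (2*τ - 4*δ) := by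
      apply intervalIntegral.integral_mono_on h0δ _ _ hI2pt
      · apply Continuous.intervalIntegrable
        have h1 := trF_cont h δ
        have h2 := trdF_cont h δ
        fun_prop
      · apply Continuous.intervalIntegrable; fun_prop
    rw [hintexp] at step
    have harg : 2*δ - 4*δ = -(2*δ) := by ring
    rw [harg] at step
    refine le_trans step ?_
    have := Real.exp_pos (2*0 - 4*δ)
    linarith
  -- I3 bound
  have hI3bound : CL * (∫ τ in (0:ℝ)..δ, ‖u τ‖^2 * (1 - Real.sqrt h * τ))
      ≤ ∫ τ in (0:ℝ)..δ,
          (Real.sqrt h + h/2 - Real.sqrt h*h*τ + (-1 + h*τ/2)^2 * (1 - Real.sqrt h*τ)) * ‖u τ‖^2 := by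
    rw [← intervalIntegral.integral_const_mul]
    apply intervalIntegral.integral_mono_on h0δ
    · exact (continuous_const.mul hcont_pw).intervalIntegrable 0 δ
    · apply Continuous.intervalIntegrable
      have : Continuous u := hu.continuous
      fun_prop
    · intro τ hτ
      have h1 := hGpLB τ hτ
      have hp0 : (0:ℝ) ≤ ‖u τ‖^2 := sq_nonneg _
      calc CL * (‖u τ‖^2 * (1 - Real.sqrt h * τ))
          = (CL * (1 - Real.sqrt h * τ)) * ‖u τ‖^2 := by ring
        _ ≤ (Real.sqrt h + h/2 - Real.sqrt h*h*τ + (-1 + h*τ/2)^2 * (1 - Real.sqrt h*τ)) * ‖u τ‖^2 :=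
            mul_le_mul_of_nonneg_right h1 hp0
  set D := ∫ τ in (0:ℝ)..δ, ‖u τ‖^2 * (1 - Real.sqrt h * τ)
  set e := Real.exp (-(2*δ)) with he
  have he0 : 0 ≤ e := (Real.exp_pos _).le
  have h128 : 4*e ≤ 128*(e*D) := by nlinarith
  have hexpand2 : (-CL + 128*e)*D = -(CL*D) + 128*(e*D) := by ring
  rw [hexpand2]
  linarith

lemma main_est (ρ h : ℝ) (hρ1 : 1/4 < ρ) (hρ2 : ρ < 1/2) (hh : 0 < h) (hh1 : h ≤ 1/4)
    (hsmall : h ^ ρ ≤ 1/2) (hδ2 : 2 ≤ h ^ (ρ - 1/2)) :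
    |lamH ρ h - (-1 - Real.sqrt h - (1/2)*h)|
      ≤ 3*h^((1:ℝ)/2+2*ρ) + 2*h^(1+ρ) + 128*Real.exp (-(2*h^(ρ-1/2))) := by
  have hρ0 : 0 < ρ := by linarith
  have hs0 : 0 ≤ Real.sqrt h := Real.sqrt_nonneg h
  have hs2 : Real.sqrt h ^ 2 = h := Real.sq_sqrt hh.le
  have hhle1 : h ≤ 1 := by linarith
  have hδpos : 0 < h ^ (ρ - 1/2) := Real.rpow_pos_of_pos hh _
  have h0δ : 0 ≤ h ^ (ρ - 1/2) := hδpos.le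
  have hcpos : 0 < h ^ ρ := Real.rpow_pos_of_pos hh _
  have hsδ : Real.sqrt h * h ^ (ρ - 1/2) = h ^ ρ := by
    rw [Real.sqrt_eq_rpow, ← Real.rpow_add hh]
    congr 1; ring
  have hsδ' : Real.sqrt h * h ^ (ρ - 1/2) ≤ 1/2 := by rw [hsδ]; exact hsmall
  have hδsq : (Real.sqrt h * h ^ (ρ - 1/2))^2 = h * (h ^ (ρ - 1/2))^2 := by
    rw [mul_pow, hs2]
  have hhδ2 : h * (h ^ (ρ - 1/2))^2 ≤ 1 := by
    rw [← hδsq]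
    nlinarith [mul_nonneg hs0 h0δ]
  -- rpow values
  have hKval : Real.sqrt h * (h^ρ * h^ρ) = h^((1:ℝ)/2+2*ρ) := by
    rw [Real.sqrt_eq_rpow, ← Real.rpow_add hh, ← Real.rpow_add hh]
    congr 1; ring
  have hAval : h * h^ρ = h^((1:ℝ)+ρ) := by
    rw [Real.rpow_add hh, Real.rpow_one]
  have hA3val : h * (h^ρ * (h^ρ * h^ρ)) = h^((1:ℝ)+3*ρ) := by
    rw [show ((1:ℝ)+3*ρ) = 1+(ρ+(ρ+ρ)) by ring, Real.rpow_add hh, Real.rpow_one,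
      Real.rpow_add hh, Real.rpow_add hh]
  have hK2val : h * (h^ρ * h^ρ) = h^((1:ℝ)+2*ρ) := by
    rw [show ((1:ℝ)+2*ρ) = 1+(ρ+ρ) by ring, Real.rpow_add hh, Real.rpow_one, Real.rpow_add hh]
  have hm1 : h^((1:ℝ)+3*ρ) ≤ h^((1:ℝ)+ρ) :=
    Real.rpow_le_rpow_of_exponent_ge hh hhle1 (by linarith)
  have hm2 : h^((1:ℝ)+2*ρ) ≤ h^((1:ℝ)/2+2*ρ) :=
    Real.rpow_le_rpow_of_exponent_ge hh hhle1 (by linarith)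
  have hKpos : 0 < h^((1:ℝ)/2+2*ρ) := Real.rpow_pos_of_pos hh _
  have hApos : 0 < h^((1:ℝ)+ρ) := Real.rpow_pos_of_pos hh _
  have hepos : 0 < Real.exp (-(2*h^(ρ-1/2))) := Real.exp_pos _
  -- pointwise facts and lemB application
  have hfacts : ∀ τ ∈ Icc (0:ℝ) (h ^ (ρ - 1/2)),
      (1+Real.sqrt h+h/2-2*h^((1:ℝ)+ρ)) * (1-Real.sqrt h*τ)
        ≤ Real.sqrt h + h/2 - Real.sqrt h*h*τ + (-1 + h*τ/2)^2 * (1 - Real.sqrt h*τ)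
      ∧ Real.sqrt h + h/2 - Real.sqrt h*h*τ + (-1 + h*τ/2)^2 * (1 - Real.sqrt h*τ)
        ≤ (1+Real.sqrt h+h/2+3*h^((1:ℝ)/2+2*ρ)) * (1-Real.sqrt h*τ) := by
    intro τ hτ
    have ha : Real.sqrt h * τ ≤ h ^ ρ := by
      rw [← hsδ]
      exact mul_le_mul_of_nonneg_left hτ.2 hs0
    have ha0 : 0 ≤ Real.sqrt h * τ := mul_nonneg hs0 hτ.1
    have hsq : (Real.sqrt h * τ)^2 ≤ (h^ρ)^2 := pow_le_pow_left₀ ha0 ha 2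
    have hcb : (Real.sqrt h * τ)^3 ≤ (h^ρ)^3 := pow_le_pow_left₀ ha0 ha 3
    have hK1 : Real.sqrt h*h*τ^2 ≤ h^((1:ℝ)/2+2*ρ) := by
      have e : Real.sqrt h*h*τ^2 = Real.sqrt h*(Real.sqrt h*τ)^2 := by
        linear_combination (-(Real.sqrt h*τ^2)) * hs2
      rw [e, ← hKval]
      have : (Real.sqrt h*τ)^2 ≤ h^ρ * h^ρ := by rw [← sq]; exact hsq
      exact mul_le_mul_of_nonneg_left this hs0
    have hK2 : h^2*τ^2 ≤ h^((1:ℝ)/2+2*ρ) := by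
      have e : h^2*τ^2 = h*(Real.sqrt h*τ)^2 := by
        linear_combination (-(h*τ^2)) * hs2
      rw [e]
      refine le_trans ?_ hm2
      rw [← hK2val]
      have : (Real.sqrt h*τ)^2 ≤ h^ρ * h^ρ := by rw [← sq]; exact hsq
      exact mul_le_mul_of_nonneg_left this hh.le
    have hA1 : Real.sqrt h*h*τ ≤ h^((1:ℝ)+ρ) := by
      have e : Real.sqrt h*h*τ = h*(Real.sqrt h*τ) := by ring
      rw [e, ← hAval]
      exact mul_le_mul_of_nonneg_left ha hh.le
    have hA2 : Real.sqrt h*h^2*τ^3 ≤ h^((1:ℝ)+ρ) := by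
      have e : Real.sqrt h*h^2*τ^3 = h*(Real.sqrt h*τ)^3 := by
        linear_combination (-(Real.sqrt h*h*τ^3)) * hs2
      rw [e]
      refine le_trans ?_ hm1
      rw [← hA3val]
      have : (Real.sqrt h*τ)^3 ≤ h^ρ * (h^ρ * h^ρ) := by
        calc (Real.sqrt h*τ)^3 ≤ (h^ρ)^3 := hcb
          _ = h^ρ * (h^ρ * h^ρ) := by ring
      exact mul_le_mul_of_nonneg_left this hh.le
    exact lemB (Real.sqrt h) h τ (h^((1:ℝ)/2+2*ρ)) (h^((1:ℝ)+ρ)) (h^ρ)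
      hs0 hs2 hτ.1 ha hsmall hK1 hK2 hA1 hA2
  have hw0 : ∀ τ ∈ Icc (0:ℝ) (h ^ (ρ - 1/2)), 0 ≤ 1 - Real.sqrt h * τ := by
    intro τ hτ
    have : Real.sqrt h * τ ≤ 1/2 := by
      refine le_trans ?_ hsδ'
      exact mul_le_mul_of_nonneg_left hτ.2 hs0
    linarith
  obtain ⟨u₀, hu₀, hu₀δ, hD₀, hr₀⟩ := trial_bound h (h ^ (ρ - 1/2))
    (1+Real.sqrt h+h/2-2*h^((1:ℝ)+ρ)) hh hh1 hδ2 hsδ' hhδ2 (fun τ hτ => (hfacts τ hτ).1)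
  have hmem : (((∫ τ in (0:ℝ)..(h ^ (ρ - 1/2)), ‖deriv u₀ τ‖^2 * (1 - Real.sqrt h * τ)) - ‖u₀ 0‖^2)
      / (∫ τ in (0:ℝ)..(h ^ (ρ - 1/2)), ‖u₀ τ‖^2 * (1 - Real.sqrt h * τ)))
      ∈ { r : ℝ | ∃ u : ℝ → ℂ, ContDiff ℝ (⊤ : ℕ∞) u ∧ u (h ^ (ρ - 1 / 2)) = 0 ∧
        0 < (∫ τ in (0 : ℝ)..(h ^ (ρ - 1 / 2)), ‖u τ‖ ^ 2 * (1 - Real.sqrt h * τ)) ∧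
        r = ((∫ τ in (0 : ℝ)..(h ^ (ρ - 1 / 2)), ‖deriv u τ‖ ^ 2 * (1 - Real.sqrt h * τ))
              - ‖u 0‖ ^ 2)
            / ∫ τ in (0 : ℝ)..(h ^ (ρ - 1 / 2)), ‖u τ‖ ^ 2 * (1 - Real.sqrt h * τ) } :=
    ⟨u₀, hu₀, hu₀δ, hD₀, rfl⟩
  have hlb : ∀ r ∈ { r : ℝ | ∃ u : ℝ → ℂ, ContDiff ℝ (⊤ : ℕ∞) u ∧ u (h ^ (ρ - 1 / 2)) = 0 ∧
        0 < (∫ τ in (0 : ℝ)..(h ^ (ρ - 1 / 2)), ‖u τ‖ ^ 2 * (1 - Real.sqrt h * τ)) ∧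
        r = ((∫ τ in (0 : ℝ)..(h ^ (ρ - 1 / 2)), ‖deriv u τ‖ ^ 2 * (1 - Real.sqrt h * τ))
              - ‖u 0‖ ^ 2)
            / ∫ τ in (0 : ℝ)..(h ^ (ρ - 1 / 2)), ‖u τ‖ ^ 2 * (1 - Real.sqrt h * τ) },
      -(1+Real.sqrt h+h/2+3*h^((1:ℝ)/2+2*ρ)) ≤ r := by
    rintro r ⟨u, h1, h2, h3, rfl⟩
    exact lower_bound h (h ^ (ρ - 1/2)) (1+Real.sqrt h+h/2+3*h^((1:ℝ)/2+2*ρ)) h0δ hw0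
      (fun τ hτ => (hfacts τ hτ).2) u h1 h2 h3
  have hlam : lamH ρ h = sInf { r : ℝ | ∃ u : ℝ → ℂ, ContDiff ℝ (⊤ : ℕ∞) u ∧ u (h ^ (ρ - 1 / 2)) = 0 ∧
        0 < (∫ τ in (0 : ℝ)..(h ^ (ρ - 1 / 2)), ‖u τ‖ ^ 2 * (1 - Real.sqrt h * τ)) ∧
        r = ((∫ τ in (0 : ℝ)..(h ^ (ρ - 1 / 2)), ‖deriv u τ‖ ^ 2 * (1 - Real.sqrt h * τ))
              - ‖u 0‖ ^ 2)
            / ∫ τ in (0 : ℝ)..(h ^ (ρ - 1 / 2)), ‖u τ‖ ^ 2 * (1 - Real.sqrt h * τ) } := rfl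
  have hlow : -(1+Real.sqrt h+h/2+3*h^((1:ℝ)/2+2*ρ)) ≤ lamH ρ h := by
    rw [hlam]
    exact le_csInf ⟨_, hmem⟩ hlb
  have hup : lamH ρ h ≤ -(1+Real.sqrt h+h/2-2*h^((1:ℝ)+ρ)) + 128 * Real.exp (-(2*h^(ρ-1/2))) := by
    rw [hlam]
    exact le_trans (csInf_le ⟨_, hlb⟩ hmem) hr₀
  rw [abs_le]
  constructor <;> linarith

lemma rpow_littleO (a : ℝ) (ha : 1 < a) :
    (fun h : ℝ => h ^ a) =o[nhdsWithin 0 (Ioi 0)] (fun h : ℝ => h) := by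
  rw [Asymptotics.isLittleO_iff]
  intro c hc
  have hd : 0 < min 1 (c ^ (a-1)⁻¹) := lt_min one_pos (Real.rpow_pos_of_pos hc _)
  filter_upwards [Ioo_mem_nhdsGT_of_mem (⟨le_refl (0:ℝ), hd⟩ : (0:ℝ) ∈ Ico 0 _)] with x hx
  obtain ⟨hx0, hxd⟩ := hx
  have key : x ^ (a-1) ≤ c := by
    have h1 : x ^ (a-1) ≤ (c ^ (a-1)⁻¹) ^ (a-1) :=
      Real.rpow_le_rpow hx0.le (le_of_lt (lt_of_lt_of_le hxd (min_le_right _ _))) (by linarith)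
    rwa [← Real.rpow_mul hc.le, inv_mul_cancel₀ (by linarith : a-1 ≠ 0), Real.rpow_one] at h1
  calc ‖x ^ a‖ = x ^ a := by
        rw [Real.norm_eq_abs, abs_of_nonneg (Real.rpow_nonneg hx0.le a)]
    _ = x ^ (a-1) * x := by
        rw [← Real.rpow_add_one hx0.ne']; congr 1; ring
    _ ≤ c * x := mul_le_mul_of_nonneg_right key hx0.le
    _ = c * ‖x‖ := by rw [Real.norm_eq_abs, abs_of_pos hx0]

lemma exp_littleO (ρ : ℝ) (hρ1 : 1/4 < ρ) (hρ2 : ρ < 1/2) :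
    (fun h : ℝ => Real.exp (-(2 * h ^ (ρ - 1/2)))) =o[nhdsWithin 0 (Ioi 0)] (fun h : ℝ => h) := by
  rw [Asymptotics.isLittleO_iff]
  intro c hc
  have hb : (0:ℝ) < 1/2 - ρ := by linarith
  have hlog : ∀ᶠ x : ℝ in atTop, Real.log x ≤ x ^ ((1:ℝ)/2 - ρ) := by
    filter_upwards [(isLittleO_log_rpow_atTop hb).def one_pos, eventually_ge_atTop (0:ℝ)]
      with x h1 hx
    have h0 : (0:ℝ) ≤ x ^ ((1:ℝ)/2-ρ) := Real.rpow_nonneg hx _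
    calc Real.log x ≤ |Real.log x| := le_abs_self _
      _ = ‖Real.log x‖ := (Real.norm_eq_abs _).symm
      _ ≤ 1 * ‖x ^ ((1:ℝ)/2-ρ)‖ := h1
      _ = x ^ ((1:ℝ)/2-ρ) := by rw [one_mul, Real.norm_eq_abs, abs_of_nonneg h0]
  have hgec : ∀ᶠ x : ℝ in atTop, -Real.log c ≤ x ^ ((1:ℝ)/2-ρ) :=
    (tendsto_rpow_atTop hb).eventually_ge_atTop _
  have hcomb : ∀ᶠ x : ℝ in atTop,
      0 ≤ 2*x^((1:ℝ)/2-ρ) - Real.log x + Real.log c := by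
    filter_upwards [hlog, hgec] with x h1 h2; linarith
  have hinv : Tendsto (fun h : ℝ => h⁻¹) (nhdsWithin (0:ℝ) (Ioi 0)) atTop :=
    tendsto_inv_nhdsGT_zero
  filter_upwards [hinv.eventually hcomb, self_mem_nhdsWithin] with h hcond hh
  have hh0 : (0:ℝ) < h := hh
  have hδ : (h⁻¹) ^ ((1:ℝ)/2-ρ) = h ^ (ρ - 1/2) := by
    rw [Real.inv_rpow hh0.le, ← Real.rpow_neg hh0.le]; congr 1; ring
  rw [hδ, Real.log_inv] at hcond
  have key : Real.exp (-(2 * h ^ (ρ - 1/2))) ≤ c * h := by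
    have harg : -(2 * h ^ (ρ - 1/2)) ≤ Real.log c + Real.log h := by linarith
    calc Real.exp (-(2 * h ^ (ρ - 1/2))) ≤ Real.exp (Real.log c + Real.log h) :=
          Real.exp_le_exp.mpr harg
      _ = c * h := by rw [Real.exp_add, Real.exp_log hc, Real.exp_log hh0]
  calc ‖Real.exp (-(2 * h ^ (ρ - 1/2)))‖ = Real.exp (-(2 * h ^ (ρ - 1/2))) := by
        rw [Real.norm_eq_abs, abs_of_pos (Real.exp_pos _)]
    _ ≤ c * h := key
    _ = c * ‖h‖ := by rw [Real.norm_eq_abs, abs_of_pos hh0]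

/-- **Lemma 2.6.** For `ρ ∈ (1/4,1/2)`, as `h → 0⁺`,
`λ₁(𝓗_h) = -1 - h^{1/2} - (1/2)h + o(h)`. -/
theorem lamH_asymptotics (ρ : ℝ) (hρ : ρ ∈ Ioo (1 / 4 : ℝ) (1 / 2)) :
    (fun h : ℝ => lamH ρ h - (-1 - Real.sqrt h - (1 / 2) * h))
      =o[nhdsWithin 0 (Ioi 0)] (fun h : ℝ => h) := by
  obtain ⟨hρ1, hρ2⟩ := hρ
  have hb : (0:ℝ) < 1/2 - ρ := by linarith
  have hρ0 : (0:ℝ) < ρ := by linarith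
  have hinv : Tendsto (fun h : ℝ => h⁻¹) (nhdsWithin (0:ℝ) (Ioi 0)) atTop :=
    tendsto_inv_nhdsGT_zero
  have hT0 : Tendsto (fun h : ℝ => (h⁻¹) ^ ((1:ℝ)/2 - ρ)) (nhdsWithin (0:ℝ) (Ioi 0)) atTop :=
    (tendsto_rpow_atTop hb).comp hinv
  have heqδ : ∀ᶠ h in nhdsWithin (0:ℝ) (Ioi 0), (h⁻¹) ^ ((1:ℝ)/2 - ρ) = h ^ (ρ - 1/2) := by
    filter_upwards [self_mem_nhdsWithin] with h hh
    have hh0 : (0:ℝ) < h := hh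
    rw [Real.inv_rpow hh0.le, ← Real.rpow_neg hh0.le]; congr 1; ring
  have hT : Tendsto (fun h : ℝ => h ^ (ρ - 1/2)) (nhdsWithin (0:ℝ) (Ioi 0)) atTop :=
    hT0.congr' heqδ
  have ev3 : ∀ᶠ h in nhdsWithin (0:ℝ) (Ioi 0), 2 ≤ h ^ (ρ - 1/2) := hT.eventually_ge_atTop 2
  have ev1 : ∀ᶠ h in nhdsWithin (0:ℝ) (Ioi 0), h ∈ Ioo (0:ℝ) (1/4) := by
    have := Ioo_mem_nhdsGT_of_mem (⟨le_refl (0:ℝ), by norm_num⟩ : (0:ℝ) ∈ Ico (0:ℝ) (1/4))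
    filter_upwards [this] with h hh using hh
  have ev2 : ∀ᶠ h in nhdsWithin (0:ℝ) (Ioi 0), h ^ ρ ≤ 1/2 := by
    have hd : 0 < ((1:ℝ)/2) ^ (ρ⁻¹) := Real.rpow_pos_of_pos (by norm_num) _
    have := Ioo_mem_nhdsGT_of_mem (⟨le_refl (0:ℝ), hd⟩ : (0:ℝ) ∈ Ico (0:ℝ) (((1:ℝ)/2) ^ (ρ⁻¹)))
    filter_upwards [this] with x hx
    have h1 : x ^ ρ ≤ (((1:ℝ)/2) ^ (ρ⁻¹)) ^ ρ := Real.rpow_le_rpow hx.1.le hx.2.le hρ0.le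
    rwa [← Real.rpow_mul (by norm_num), inv_mul_cancel₀ (ne_of_gt hρ0), Real.rpow_one] at h1
  have hbound : ∀ᶠ h in nhdsWithin (0:ℝ) (Ioi 0),
      |lamH ρ h - (-1 - Real.sqrt h - (1/2)*h)|
        ≤ 3*h^((1:ℝ)/2+2*ρ) + 2*h^((1:ℝ)+ρ) + 128*Real.exp (-(2*h^(ρ-1/2))) := by
    filter_upwards [ev1, ev2, ev3] with h h1 h2 h3
    exact main_est ρ h hρ1 hρ2 h1.1 h1.2.le h2 h3
  have hE1 := (rpow_littleO ((1:ℝ)/2+2*ρ) (by linarith)).const_mul_left 3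
  have hE2 := (rpow_littleO ((1:ℝ)+ρ) (by linarith)).const_mul_left 2
  have hE3 := (exp_littleO ρ hρ1 hρ2).const_mul_left 128
  have hE := (hE1.add hE2).add hE3
  rw [Asymptotics.isLittleO_iff] at hE ⊢
  intro c hc
  filter_upwards [hbound, hE hc] with x h1 h2
  have h3 : |lamH ρ x - (-1 - Real.sqrt x - (1/2)*x)|
      ≤ ‖3*x^((1:ℝ)/2+2*ρ) + 2*x^((1:ℝ)+ρ) + 128*Real.exp (-(2*x^(ρ-1/2)))‖ :=
    le_trans h1 (le_abs_self _)
  calc ‖lamH ρ x - (-1 - Real.sqrt x - (1/2)*x)‖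
      = |lamH ρ x - (-1 - Real.sqrt x - (1/2)*x)| := Real.norm_eq_abs _
    _ ≤ c * ‖x‖ := le_trans h3 h2

end
end

section
/- Let b>0, ρ∈(1/4,1/2) and h∈(0,1) with h^{1/2−ρ}<1/3. If m∈ℤ satisfies |m|>(1+√2)b/2, then λ₁(𝓗^{b,ρ}_{m,h}) > inf_{ℓ∈ℤ} λ₁(𝓗^{b,ρ}_{ℓ,h}). -/
open MeasureTheory Set Filter

noncomputable section

lemma trace_bound {u : ℝ → ℂ} {δ : ℝ} (hδ : 0 ≤ δ) (hu : ContDiff ℝ (⊤ : ℕ∞) u)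
    (hud : u δ = 0) :
    ‖u 0‖ ^ 2 ≤ ∫ τ in (0:ℝ)..δ, (2/3 * ‖deriv u τ‖ ^ 2 + 3/2 * ‖u τ‖ ^ 2) := by
  have hdiff : ∀ τ : ℝ, HasDerivAt u (deriv u τ) τ := fun τ =>
    ((hu.differentiable (by simp)) τ).hasDerivAt
  have hdc : Continuous (deriv u) := hu.continuous_deriv (by simp)
  have huc : Continuous u := hu.continuous
  set g : ℝ → ℝ := fun τ => (u τ).re ^ 2 + (u τ).im ^ 2 with hg
  set g' : ℝ → ℝ := fun τ => 2 * (u τ).re * (deriv u τ).re + 2 * (u τ).im * (deriv u τ).im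
    with hg'
  have hgd : ∀ τ, HasDerivAt g (g' τ) τ := by
    intro τ
    have hre : HasDerivAt (fun t => (u t).re) ((deriv u τ).re) τ :=
      (Complex.reCLM.hasFDerivAt.comp_hasDerivAt τ (hdiff τ))
    have him : HasDerivAt (fun t => (u t).im) ((deriv u τ).im) τ :=
      (Complex.imCLM.hasFDerivAt.comp_hasDerivAt τ (hdiff τ))
    have h2 := ((hre.pow 2).add (him.pow 2))
    refine h2.congr_deriv ?_
    simp only [hg']; norm_num
  have hgc : Continuous g' := by fun_prop
  have hnorm : ∀ τ : ℝ, ‖u τ‖ ^ 2 = g τ := by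
    intro τ
    rw [hg, Complex.sq_norm, Complex.normSq_apply]; ring
  have key : ∫ τ in (0:ℝ)..δ, g' τ = g δ - g 0 :=
    intervalIntegral.integral_eq_sub_of_hasDerivAt (fun τ _ => hgd τ)
      (hgc.intervalIntegrable _ _)
  have hgδ : g δ = 0 := by rw [← hnorm, hud]; simp
  have hg0 : ‖u 0‖ ^ 2 = ∫ τ in (0:ℝ)..δ, (-g' τ) := by
    rw [intervalIntegral.integral_neg, key, hgδ, hnorm]; ring
  rw [hg0]
  apply intervalIntegral.integral_mono_on hδ ((hgc.neg).intervalIntegrable _ _)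
  · exact (by fun_prop :
      Continuous fun τ => 2/3 * ‖deriv u τ‖ ^ 2 + 3/2 * ‖u τ‖ ^ 2).intervalIntegrable _ _
  · intro τ hτ
    have h1 : ‖u τ‖ ^ 2 = (u τ).re ^ 2 + (u τ).im ^ 2 := by
      rw [Complex.sq_norm, Complex.normSq_apply]; ring
    have h2 : ‖deriv u τ‖ ^ 2 = (deriv u τ).re ^ 2 + (deriv u τ).im ^ 2 := by
      rw [Complex.sq_norm, Complex.normSq_apply]; ring
    rw [h1, h2, hg']
    simp only [Pi.neg_apply]
    nlinarith [sq_nonneg (2 * (deriv u τ).re + 3 * (u τ).re),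
      sq_nonneg (2 * (deriv u τ).im + 3 * (u τ).im)]

lemma pot_bound {b h w : ℝ} (m : ℤ) (hb : 0 < b) (hh : 0 < h)
    (hm : (1 + Real.sqrt 2) * b / 2 < |(m : ℝ)|)
    (hw : 2/3 ≤ w) (hw1 : w ≤ 1) :
    h / w ^ 2 * ((0:ℝ) - b / 2 * w ^ 2) ^ 2 + h * (b ^ 2 / 4)
      ≤ h / w ^ 2 * ((m:ℝ) - b / 2 * w ^ 2) ^ 2 := by
  have hw0 : 0 < w := by linarith
  have hw2 : w ^ 2 ≤ 1 := by nlinarith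
  have hs2 : Real.sqrt 2 ^ 2 = 2 := Real.sq_sqrt (by norm_num)
  have hs2' : (1:ℝ) ≤ Real.sqrt 2 := by nlinarith [Real.sqrt_nonneg 2]
  set M := |(m:ℝ)| with hM
  set x := (m:ℝ) - b / 2 * w ^ 2 with hx
  have habs : M - b / 2 * w ^ 2 ≤ |x| := by
    calc M - b / 2 * w ^ 2
        = |(m:ℝ)| - |b / 2 * w ^ 2| := by
          rw [abs_of_nonneg (show (0:ℝ) ≤ b / 2 * w ^ 2 by positivity)]
      _ ≤ |x| := abs_sub_abs_le_abs_sub _ _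
  have h1 : Real.sqrt 2 * b / 2 ≤ |x| := by
    nlinarith [mul_nonneg hb.le (by linarith : (0:ℝ) ≤ 1 - w ^ 2)]
  have h2 : (Real.sqrt 2 * b / 2) * (Real.sqrt 2 * b / 2) = b ^ 2 / 2 := by
    linear_combination (b ^ 2 / 4) * hs2
  have h3 : Real.sqrt 2 * b / 2 * (Real.sqrt 2 * b / 2) ≤ |x| * |x| :=
    mul_le_mul h1 h1 (by positivity) (abs_nonneg x)
  have h4 : |x| * |x| = x ^ 2 := by rw [← sq_abs x]; ring
  have hxsq : b ^ 2 / 2 ≤ x ^ 2 := by rw [← h4]; linarith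
  have hL : h / w ^ 2 * ((0:ℝ) - b / 2 * w ^ 2) ^ 2 = h * (b ^ 2 / 4) * w ^ 2 := by
    field_simp; ring
  have hR : h * x ^ 2 ≤ h / w ^ 2 * x ^ 2 := by
    have hd : h ≤ h / w ^ 2 := by
      rw [le_div_iff₀ (by positivity)]
      nlinarith [mul_nonneg hh.le (by linarith : (0:ℝ) ≤ 1 - w ^ 2)]
    nlinarith [sq_nonneg x]
  rw [hL]
  nlinarith [mul_le_mul_of_nonneg_left hxsq hh.le,
    mul_nonneg (mul_nonneg hh.le (sq_nonneg b)) (by linarith : (0:ℝ) ≤ 1 - w ^ 2)]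

lemma wlo {h d : ℝ} (hkey : Real.sqrt h * d ≤ 1/3) :
    ∀ τ ∈ Icc (0:ℝ) d, 2/3 ≤ 1 - Real.sqrt h * τ := by
  intro τ hτ
  have h1 : Real.sqrt h * τ ≤ Real.sqrt h * d :=
    mul_le_mul_of_nonneg_left hτ.2 (Real.sqrt_nonneg h)
  linarith

lemma whi {h d : ℝ} : ∀ τ ∈ Icc (0:ℝ) d, 1 - Real.sqrt h * τ ≤ 1 := by
  intro τ hτ
  have : 0 ≤ Real.sqrt h * τ := mul_nonneg (Real.sqrt_nonneg h) hτ.1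
  linarith

lemma quot_lb {h d : ℝ} (hδ0 : 0 < d) (hkey : Real.sqrt h * d ≤ 1/3)
    {u : ℝ → ℂ} (hu : ContDiff ℝ (⊤ : ℕ∞) u) (hud : u d = 0)
    (hN : 0 < ∫ τ in (0:ℝ)..d, ‖u τ‖ ^ 2 * (1 - Real.sqrt h * τ))
    {V : ℝ → ℝ} (hVc : ContinuousOn V (Icc 0 d)) (hVnn : ∀ τ ∈ Icc (0:ℝ) d, 0 ≤ V τ) :
    -(9/4 : ℝ) ≤
      ((∫ τ in (0:ℝ)..d, (‖deriv u τ‖ ^ 2 + V τ * ‖u τ‖ ^ 2) * (1 - Real.sqrt h * τ))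
          - ‖u 0‖ ^ 2)
        / ∫ τ in (0:ℝ)..d, ‖u τ‖ ^ 2 * (1 - Real.sqrt h * τ) := by
  have hcd : Continuous (deriv u) := hu.continuous_deriv (by simp)
  have hcu : Continuous u := hu.continuous
  have hwlo := wlo hkey
  have hAint : IntervalIntegrable (fun τ => ‖deriv u τ‖ ^ 2 * (1 - Real.sqrt h * τ))
      volume 0 d :=
    (by fun_prop : Continuous fun τ => ‖deriv u τ‖ ^ 2 * (1 - Real.sqrt h * τ)).intervalIntegrable _ _
  have hBint : IntervalIntegrable (fun τ => V τ * ‖u τ‖ ^ 2 * (1 - Real.sqrt h * τ))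
      volume 0 d := by
    apply ContinuousOn.intervalIntegrable
    rw [uIcc_of_le hδ0.le]
    exact (hVc.mul (by fun_prop)).mul (by fun_prop)
  have hsplit : (∫ τ in (0:ℝ)..d, (‖deriv u τ‖ ^ 2 + V τ * ‖u τ‖ ^ 2) * (1 - Real.sqrt h * τ))
      = (∫ τ in (0:ℝ)..d, ‖deriv u τ‖ ^ 2 * (1 - Real.sqrt h * τ))
        + ∫ τ in (0:ℝ)..d, V τ * ‖u τ‖ ^ 2 * (1 - Real.sqrt h * τ) := by
    rw [← intervalIntegral.integral_add hAint hBint]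
    congr 1; funext τ; ring
  have hBnn : 0 ≤ ∫ τ in (0:ℝ)..d, V τ * ‖u τ‖ ^ 2 * (1 - Real.sqrt h * τ) := by
    apply intervalIntegral.integral_nonneg hδ0.le
    intro τ hτ
    have := hwlo τ hτ
    exact mul_nonneg (mul_nonneg (hVnn τ hτ) (by positivity)) (by linarith)
  have htr := trace_bound hδ0.le hu hud
  have hmid : (∫ τ in (0:ℝ)..d, (2/3 * ‖deriv u τ‖ ^ 2 + 3/2 * ‖u τ‖ ^ 2))
      ≤ (∫ τ in (0:ℝ)..d, ‖deriv u τ‖ ^ 2 * (1 - Real.sqrt h * τ))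
        + 9/4 * ∫ τ in (0:ℝ)..d, ‖u τ‖ ^ 2 * (1 - Real.sqrt h * τ) := by
    have step : (∫ τ in (0:ℝ)..d, (2/3 * ‖deriv u τ‖ ^ 2 + 3/2 * ‖u τ‖ ^ 2))
        ≤ ∫ τ in (0:ℝ)..d, (‖deriv u τ‖ ^ 2 * (1 - Real.sqrt h * τ)
            + 9/4 * (‖u τ‖ ^ 2 * (1 - Real.sqrt h * τ))) := by
      apply intervalIntegral.integral_mono_on hδ0.le
      · exact (by fun_prop :
          Continuous fun τ => 2/3 * ‖deriv u τ‖ ^ 2 + 3/2 * ‖u τ‖ ^ 2).intervalIntegrable _ _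
      · exact (by fun_prop : Continuous fun τ => ‖deriv u τ‖ ^ 2 * (1 - Real.sqrt h * τ)
            + 9/4 * (‖u τ‖ ^ 2 * (1 - Real.sqrt h * τ))).intervalIntegrable _ _
      · intro τ hτ
        have hw := hwlo τ hτ
        have hc : (0:ℝ) ≤ ‖deriv u τ‖ ^ 2 := by positivity
        have ha : (0:ℝ) ≤ ‖u τ‖ ^ 2 := by positivity
        nlinarith [mul_nonneg hc (by linarith : (0:ℝ) ≤ 1 - Real.sqrt h * τ - 2/3),
          mul_nonneg ha (by linarith : (0:ℝ) ≤ 1 - Real.sqrt h * τ - 2/3)]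
    calc (∫ τ in (0:ℝ)..d, (2/3 * ‖deriv u τ‖ ^ 2 + 3/2 * ‖u τ‖ ^ 2)) ≤ _ := step
      _ = _ := by
        rw [intervalIntegral.integral_add hAint
          (((by fun_prop : Continuous fun τ => ‖u τ‖ ^ 2 * (1 - Real.sqrt h * τ)).intervalIntegrable
            (0:ℝ) d).const_mul (9/4 : ℝ)), intervalIntegral.integral_const_mul]
  rw [hsplit, le_div_iff₀ hN]
  linarith

lemma quot_compare {h d ε : ℝ} (hδ0 : 0 < d) (hkey : Real.sqrt h * d ≤ 1/3)
    {u : ℝ → ℂ} (hu : ContDiff ℝ (⊤ : ℕ∞) u)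
    (hN : 0 < ∫ τ in (0:ℝ)..d, ‖u τ‖ ^ 2 * (1 - Real.sqrt h * τ))
    {V W : ℝ → ℝ} (hVc : ContinuousOn V (Icc 0 d)) (hWc : ContinuousOn W (Icc 0 d))
    (hpt : ∀ τ ∈ Icc (0:ℝ) d, V τ + ε ≤ W τ) :
    ((∫ τ in (0:ℝ)..d, (‖deriv u τ‖ ^ 2 + V τ * ‖u τ‖ ^ 2) * (1 - Real.sqrt h * τ))
        - ‖u 0‖ ^ 2)
      / (∫ τ in (0:ℝ)..d, ‖u τ‖ ^ 2 * (1 - Real.sqrt h * τ)) + ε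
    ≤ ((∫ τ in (0:ℝ)..d, (‖deriv u τ‖ ^ 2 + W τ * ‖u τ‖ ^ 2) * (1 - Real.sqrt h * τ))
        - ‖u 0‖ ^ 2)
      / ∫ τ in (0:ℝ)..d, ‖u τ‖ ^ 2 * (1 - Real.sqrt h * τ) := by
  have hcd : Continuous (deriv u) := hu.continuous_deriv (by simp)
  have hcu : Continuous u := hu.continuous
  have hwlo := wlo hkey
  have hNint : IntervalIntegrable (fun τ => ‖u τ‖ ^ 2 * (1 - Real.sqrt h * τ)) volume 0 d :=
    (by fun_prop : Continuous fun τ => ‖u τ‖ ^ 2 * (1 - Real.sqrt h * τ)).intervalIntegrable _ _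
  have hIV : IntervalIntegrable
      (fun τ => (‖deriv u τ‖ ^ 2 + V τ * ‖u τ‖ ^ 2) * (1 - Real.sqrt h * τ)) volume 0 d := by
    apply ContinuousOn.intervalIntegrable
    rw [uIcc_of_le hδ0.le]
    exact (((by fun_prop : Continuous fun τ => ‖deriv u τ‖ ^ 2).continuousOn).add
      (hVc.mul (by fun_prop))).mul (by fun_prop)
  have hIW : IntervalIntegrable
      (fun τ => (‖deriv u τ‖ ^ 2 + W τ * ‖u τ‖ ^ 2) * (1 - Real.sqrt h * τ)) volume 0 d := by
    apply ContinuousOn.intervalIntegrable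
    rw [uIcc_of_le hδ0.le]
    exact (((by fun_prop : Continuous fun τ => ‖deriv u τ‖ ^ 2).continuousOn).add
      (hWc.mul (by fun_prop))).mul (by fun_prop)
  set N := ∫ τ in (0:ℝ)..d, ‖u τ‖ ^ 2 * (1 - Real.sqrt h * τ) with hNdef
  have hmono : (∫ τ in (0:ℝ)..d, (‖deriv u τ‖ ^ 2 + V τ * ‖u τ‖ ^ 2) * (1 - Real.sqrt h * τ))
      + ε * N
      ≤ ∫ τ in (0:ℝ)..d, (‖deriv u τ‖ ^ 2 + W τ * ‖u τ‖ ^ 2) * (1 - Real.sqrt h * τ) := by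
    have heq : (∫ τ in (0:ℝ)..d, (‖deriv u τ‖ ^ 2 + V τ * ‖u τ‖ ^ 2) * (1 - Real.sqrt h * τ))
        + ε * N
        = ∫ τ in (0:ℝ)..d, ((‖deriv u τ‖ ^ 2 + V τ * ‖u τ‖ ^ 2) * (1 - Real.sqrt h * τ)
            + ε * (‖u τ‖ ^ 2 * (1 - Real.sqrt h * τ))) := by
      rw [intervalIntegral.integral_add hIV (hNint.const_mul ε),
        intervalIntegral.integral_const_mul]
    rw [heq]
    apply intervalIntegral.integral_mono_on hδ0.le (hIV.add (hNint.const_mul ε)) hIW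
    intro τ hτ
    have hVW := hpt τ hτ
    have hw0 : (0:ℝ) ≤ 1 - Real.sqrt h * τ := by have := hwlo τ hτ; linarith
    have ha : (0:ℝ) ≤ ‖u τ‖ ^ 2 := by positivity
    nlinarith [mul_le_mul_of_nonneg_right (mul_le_mul_of_nonneg_right hVW ha) hw0]
  have hfs : ((∫ τ in (0:ℝ)..d, (‖deriv u τ‖ ^ 2 + V τ * ‖u τ‖ ^ 2) * (1 - Real.sqrt h * τ))
      - ‖u 0‖ ^ 2) / N + ε
      = ((∫ τ in (0:ℝ)..d, (‖deriv u τ‖ ^ 2 + V τ * ‖u τ‖ ^ 2) * (1 - Real.sqrt h * τ))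
      - ‖u 0‖ ^ 2 + ε * N) / N := by
    field_simp
  rw [hfs]
  exact div_le_div_of_nonneg_right (by linarith) hN.le

lemma potC {b h d : ℝ} (c : ℝ) (hkey : Real.sqrt h * d ≤ 1/3) :
    ContinuousOn (fun τ => h / (1 - Real.sqrt h * τ) ^ 2 *
      (c - b / 2 * (1 - Real.sqrt h * τ) ^ 2) ^ 2) (Icc 0 d) := by
  apply ContinuousOn.mul
  · apply ContinuousOn.div continuousOn_const (by fun_prop)
    intro τ hτ
    have := wlo hkey τ hτ
    exact pow_ne_zero 2 (by linarith)
  · fun_prop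

def S (b ρ h : ℝ) (m : ℤ) : Set ℝ :=
  { r : ℝ | ∃ u : ℝ → ℂ, ContDiff ℝ (⊤ : ℕ∞) u ∧ u (h ^ (ρ - 1 / 2)) = 0 ∧
    0 < (∫ τ in (0 : ℝ)..(h ^ (ρ - 1 / 2)), ‖u τ‖ ^ 2 * (1 - Real.sqrt h * τ)) ∧
    r = ((∫ τ in (0 : ℝ)..(h ^ (ρ - 1 / 2)),
            (‖deriv u τ‖ ^ 2
              + h / (1 - Real.sqrt h * τ) ^ 2
                * ((m : ℝ) - b / 2 * (1 - Real.sqrt h * τ) ^ 2) ^ 2 * ‖u τ‖ ^ 2)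
              * (1 - Real.sqrt h * τ))
          - ‖u 0‖ ^ 2)
        / ∫ τ in (0 : ℝ)..(h ^ (ρ - 1 / 2)), ‖u τ‖ ^ 2 * (1 - Real.sqrt h * τ) }

lemma mem_S_lb {b ρ h : ℝ} (k : ℤ) (hh : 0 < h) (hδ0 : 0 < h ^ (ρ - 1 / 2))
    (hkey : Real.sqrt h * h ^ (ρ - 1 / 2) ≤ 1 / 3) :
    ∀ r ∈ S b ρ h k, -(9/4 : ℝ) ≤ r := by
  intro r hr
  simp only [S, Set.mem_setOf_eq] at hr
  obtain ⟨u, hu, hud, hN, rfl⟩ := hr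
  refine quot_lb hδ0 hkey hu hud hN
    (V := fun τ => h / (1 - Real.sqrt h * τ) ^ 2 *
      ((k:ℝ) - b / 2 * (1 - Real.sqrt h * τ) ^ 2) ^ 2) (potC _ hkey) ?_
  intro τ hτ
  have h1 : (0:ℝ) ≤ h / (1 - Real.sqrt h * τ) ^ 2 := div_nonneg hh.le (sq_nonneg _)
  exact mul_nonneg h1 (sq_nonneg _)

lemma S_nonempty {b ρ h : ℝ} (k : ℤ) (hδ0 : 0 < h ^ (ρ - 1 / 2))
    (hkey : Real.sqrt h * h ^ (ρ - 1 / 2) ≤ 1 / 3) : (S b ρ h k).Nonempty := by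
  set d := h ^ (ρ - 1 / 2) with hd
  refine ⟨_, fun τ : ℝ => ((d - τ : ℝ) : ℂ),
    Complex.ofRealCLM.contDiff.comp (contDiff_const.sub contDiff_id), by simp [hd], ?_, rfl⟩
  apply intervalIntegral.intervalIntegral_pos_of_pos_on
  · apply Continuous.intervalIntegrable; fun_prop
  · intro τ hτ
    have hw := wlo hkey τ ⟨hτ.1.le, hτ.2.le⟩
    have hnz : ‖((d - τ : ℝ) : ℂ)‖ ^ 2 = (d - τ) ^ 2 := by
      rw [Complex.norm_real]; exact sq_abs _
    rw [hnz]
    have h2 : (0:ℝ) < (d - τ) ^ 2 := pow_pos (by linarith [hτ.2]) 2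
    exact mul_pos h2 (by linarith)
  · exact hδ0

/-- **Proposition 2.7.** Let `b > 0`, `ρ ∈ (1/4,1/2)` and `h ∈ (0,1)` with
`h^{1/2-ρ} < 1/3`. If `m ∈ ℤ` satisfies `|m| > (1+√2)b/2`, then
`λ₁(𝓗^{b,ρ}_{m,h}) > inf_{ℓ∈ℤ} λ₁(𝓗^{b,ρ}_{ℓ,h})`. -/
theorem fiberLam_large_m (b ρ h : ℝ) (m : ℤ) (hb : 0 < b)
    (hρ : ρ ∈ Ioo (1 / 4 : ℝ) (1 / 2)) (hh : h ∈ Ioo (0 : ℝ) 1)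
    (hh' : h ^ (1 / 2 - ρ) < 1 / 3)
    (hm : (1 + Real.sqrt 2) * b / 2 < |(m : ℝ)|) :
    fiberLam b ρ h m > ⨅ ℓ : ℤ, fiberLam b ρ h ℓ := by
  have he : ∀ k : ℤ, fiberLam b ρ h k = sInf (S b ρ h k) := fun k => rfl
  have h2 : (⨅ ℓ : ℤ, fiberLam b ρ h ℓ) = ⨅ ℓ : ℤ, sInf (S b ρ h ℓ) :=
    iInf_congr fun ℓ => he ℓ
  rw [he, h2]
  obtain ⟨hρ1, hρ2⟩ := hρ
  obtain ⟨hh0, hh1⟩ := hh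
  have hδ0 : 0 < h ^ (ρ - 1 / 2) := Real.rpow_pos_of_pos hh0 _
  have hkey : Real.sqrt h * h ^ (ρ - 1 / 2) ≤ 1 / 3 := by
    rw [Real.sqrt_eq_rpow, ← Real.rpow_add hh0,
      show (1 / 2 + (ρ - 1 / 2) : ℝ) = ρ by ring]
    have h2 : h ^ ρ < h ^ (1 / 2 - ρ) :=
      Real.rpow_lt_rpow_of_exponent_gt hh0 hh1 (by linarith)
    linarith
  have hbdd0 : BddBelow (S b ρ h 0) := ⟨-(9/4), fun r hr => mem_S_lb 0 hh0 hδ0 hkey r hr⟩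
  have hlb : ∀ ℓ : ℤ, -(9/4 : ℝ) ≤ sInf (S b ρ h ℓ) := fun ℓ =>
    le_csInf (S_nonempty ℓ hδ0 hkey) (mem_S_lb ℓ hh0 hδ0 hkey)
  have hrange : BddBelow (Set.range fun ℓ : ℤ => sInf (S b ρ h ℓ)) := by
    refine ⟨-(9/4), ?_⟩
    rintro x ⟨ℓ, rfl⟩
    exact hlb ℓ
  have hinf : (⨅ ℓ : ℤ, sInf (S b ρ h ℓ)) ≤ sInf (S b ρ h 0) := ciInf_le hrange 0
  have hε : 0 < h * (b ^ 2 / 4) := by positivity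
  have hstep : sInf (S b ρ h 0) + h * (b ^ 2 / 4) ≤ sInf (S b ρ h m) := by
    apply le_csInf (S_nonempty m hδ0 hkey)
    intro r hr
    simp only [S, Set.mem_setOf_eq] at hr
    obtain ⟨u, hu, hud, hN, rfl⟩ := hr
    have hmem0 : ((∫ τ in (0 : ℝ)..(h ^ (ρ - 1 / 2)),
            (‖deriv u τ‖ ^ 2
              + h / (1 - Real.sqrt h * τ) ^ 2
                * (((0:ℤ) : ℝ) - b / 2 * (1 - Real.sqrt h * τ) ^ 2) ^ 2 * ‖u τ‖ ^ 2)
              * (1 - Real.sqrt h * τ))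
          - ‖u 0‖ ^ 2)
        / (∫ τ in (0 : ℝ)..(h ^ (ρ - 1 / 2)), ‖u τ‖ ^ 2 * (1 - Real.sqrt h * τ)) ∈
        S b ρ h 0 := ⟨u, hu, hud, hN, rfl⟩
    have hcs := csInf_le hbdd0 hmem0
    have hpt : ∀ τ ∈ Icc (0:ℝ) (h ^ (ρ - 1 / 2)),
        (fun τ => h / (1 - Real.sqrt h * τ) ^ 2 *
          (((0:ℤ):ℝ) - b / 2 * (1 - Real.sqrt h * τ) ^ 2) ^ 2) τ + h * (b ^ 2 / 4)
        ≤ (fun τ => h / (1 - Real.sqrt h * τ) ^ 2 *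
          ((m:ℝ) - b / 2 * (1 - Real.sqrt h * τ) ^ 2) ^ 2) τ := by
      intro τ hτ
      have hw := wlo hkey τ hτ
      have hw1 := whi (h := h) (d := h ^ (ρ - 1 / 2)) τ hτ
      push_cast
      exact pot_bound m hb hh0 hm hw hw1
    have hq := quot_compare hδ0 hkey hu hN (potC _ hkey) (potC _ hkey) hpt
    beta_reduce at hq
    linarith
  linarith


end
end

section
/- Let A>0, b>0 and ρ∈(1/4,1/2). Then there exists a constant C>0, independent of m and h, such that for all h∈(0,1) with h^{1/2−ρ}<1/3 and all m∈ℤ with |m|≤A, |λ₁(𝓗^{b,ρ}_{m,h}) − λ₁(𝓗_h) − (m−b/2)²h| ≤ C·h^{1+ρ}. -/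
open MeasureTheory Set Filter

noncomputable section

section FiberLamAux
open intervalIntegral

lemma trace_ineq (u : ℝ → ℂ) (hu : ContDiff ℝ (⊤ : ℕ∞) u) (d : ℝ) (hd : 0 < d) (hud : u d = 0) :
    ‖u 0‖ ^ 2 ≤ (2/3) * (∫ τ in (0:ℝ)..d, ‖deriv u τ‖ ^ 2)
      + (3/2) * (∫ τ in (0:ℝ)..d, ‖u τ‖ ^ 2) := by
  have hcu : Continuous u := hu.continuous
  have hcd : Continuous (deriv u) := hu.continuous_deriv (by simp)
  have hder : ∀ x ∈ uIcc (0:ℝ) d, HasDerivAt (fun τ => ‖u τ‖ ^ 2)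
      (2 * (inner ℝ (u x) (deriv u x) : ℝ)) x := by
    intro x _
    exact (hu.differentiable (by simp) x).hasDerivAt.norm_sq
  have hci : Continuous (fun x => 2 * (inner ℝ (u x) (deriv u x) : ℝ)) :=
    continuous_const.mul (hcu.inner hcd)
  have hint : IntervalIntegrable (fun x => 2 * (inner ℝ (u x) (deriv u x) : ℝ)) volume 0 d :=
    hci.intervalIntegrable _ _
  have hftc := integral_eq_sub_of_hasDerivAt hder hint
  rw [hud] at hftc
  simp only [norm_zero] at hftc
  have key : ‖u 0‖ ^ 2 = ∫ x in (0:ℝ)..d, -(2 * (inner ℝ (u x) (deriv u x) : ℝ)) := by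
    rw [intervalIntegral.integral_neg, hftc]; ring
  rw [key]
  have hmono : (∫ x in (0:ℝ)..d, -(2 * (inner ℝ (u x) (deriv u x) : ℝ)))
      ≤ ∫ x in (0:ℝ)..d, ((2/3) * ‖deriv u x‖ ^ 2 + (3/2) * ‖u x‖ ^ 2) := by
    apply intervalIntegral.integral_mono_on hd.le hint.neg
    · exact (((continuous_const.mul (hcd.norm.pow 2)).add
        (continuous_const.mul (hcu.norm.pow 2)))).intervalIntegrable _ _
    · intro x _
      have h1 : |(inner ℝ (u x) (deriv u x) : ℝ)| ≤ ‖u x‖ * ‖deriv u x‖ :=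
        abs_real_inner_le_norm _ _
      have h2 : -(inner ℝ (u x) (deriv u x) : ℝ) ≤ ‖u x‖ * ‖deriv u x‖ := by
        cases abs_le.mp h1 with
        | intro hl hr => linarith
      simp only [Pi.neg_apply]
      nlinarith [sq_nonneg (2 * ‖deriv u x‖ - 3 * ‖u x‖), norm_nonneg (u x), norm_nonneg (deriv u x)]
  calc _ ≤ ∫ x in (0:ℝ)..d, ((2/3) * ‖deriv u x‖ ^ 2 + (3/2) * ‖u x‖ ^ 2) := hmono
    _ = (2/3) * (∫ τ in (0:ℝ)..d, ‖deriv u τ‖ ^ 2) + (3/2) * (∫ τ in (0:ℝ)..d, ‖u τ‖ ^ 2) := by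
        rw [intervalIntegral.integral_add (f := fun x => (2/3) * ‖deriv u x‖ ^ 2) (g := fun x => (3/2) * ‖u x‖ ^ 2) ((continuous_const.mul (hcd.norm.pow 2)).intervalIntegrable _ _)
          ((continuous_const.mul (hcu.norm.pow 2)).intervalIntegrable _ _),
          intervalIntegral.integral_const_mul, intervalIntegral.integral_const_mul]

lemma aux_pot (A b m s : ℝ) (hb : 0 < b) (hm : |m| ≤ A) (hs0 : 0 ≤ s) (hs : s ≤ 1/3) :
    |1/(1-s)^2 * (m - b/2*(1-s)^2)^2 - (m - b/2)^2| ≤ (9/2)*(A+b/2)^2 * s := by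
  have hA : 0 ≤ A := le_trans (abs_nonneg m) hm
  have hw1 : (2:ℝ)/3 ≤ 1 - s := by linarith
  have hw2 : 1 - s ≤ 1 := by linarith
  have hwne : (1-s)^2 ≠ 0 := by positivity
  have key : 1/(1-s)^2 * (m - b/2*(1-s)^2)^2 - (m - b/2)^2
      = (s*(1+(1-s))*(m + b/2*(1-s))*(m - b/2*(1-s))) / (1-s)^2 := by
    field_simp
    ring
  rw [key, abs_div, abs_of_nonneg (by positivity : (0:ℝ) ≤ (1-s)^2)]
  have hb1 : |m + b/2*(1-s)| ≤ A + b/2 := by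
    have := abs_le.mp hm
    rw [abs_le]
    constructor <;> nlinarith
  have hb2 : |m - b/2*(1-s)| ≤ A + b/2 := by
    have := abs_le.mp hm
    rw [abs_le]
    constructor <;> nlinarith
  have hnum : |s*(1+(1-s))*(m + b/2*(1-s))*(m - b/2*(1-s))| ≤ s * 2 * (A+b/2) * (A+b/2) := by
    have h1 : |s| = s := abs_of_nonneg hs0
    have h2 : |1+(1-s)| ≤ 2 := by rw [abs_le]; constructor <;> linarith
    rw [abs_mul, abs_mul, abs_mul, h1]
    gcongr
  have hden : (2/3:ℝ)^2 ≤ (1-s)^2 := by nlinarith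
  calc |s*(1+(1-s))*(m + b/2*(1-s))*(m - b/2*(1-s))| / (1-s)^2
      ≤ (s * 2 * (A+b/2) * (A+b/2)) / ((2/3:ℝ)^2) := by
        apply div_le_div₀ (by positivity) hnum (by positivity) hden
    _ = (9/2)*(A+b/2)^2 * s := by ring

lemma aux_elem (b h δ ε : ℝ) (m : ℤ) (hδ : 0 < δ) (hε : 0 ≤ ε) (hh : 0 ≤ h)
    (hwlo : ∀ τ ∈ Icc (0:ℝ) δ, 2/3 ≤ 1 - Real.sqrt h * τ)
    (hV : ∀ τ ∈ Icc (0:ℝ) δ,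
      |h / (1 - Real.sqrt h * τ) ^ 2 * ((m:ℝ) - b / 2 * (1 - Real.sqrt h * τ) ^ 2) ^ 2
        - ((m:ℝ) - b / 2) ^ 2 * h| ≤ ε)
    (u : ℝ → ℂ) (hu : ContDiff ℝ (⊤ : ℕ∞) u) (hud : u δ = 0)
    (hN : 0 < ∫ τ in (0:ℝ)..δ, ‖u τ‖ ^ 2 * (1 - Real.sqrt h * τ)) :
    -(9/4) ≤ ((∫ τ in (0:ℝ)..δ, ‖deriv u τ‖ ^ 2 * (1 - Real.sqrt h * τ)) - ‖u 0‖ ^ 2)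
        / (∫ τ in (0:ℝ)..δ, ‖u τ‖ ^ 2 * (1 - Real.sqrt h * τ)) ∧
    ((∫ τ in (0:ℝ)..δ, ‖deriv u τ‖ ^ 2 * (1 - Real.sqrt h * τ)) - ‖u 0‖ ^ 2)
        / (∫ τ in (0:ℝ)..δ, ‖u τ‖ ^ 2 * (1 - Real.sqrt h * τ))
      ≤ ((∫ τ in (0:ℝ)..δ,
            (‖deriv u τ‖ ^ 2
              + h / (1 - Real.sqrt h * τ) ^ 2
                * ((m : ℝ) - b / 2 * (1 - Real.sqrt h * τ) ^ 2) ^ 2 * ‖u τ‖ ^ 2)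
              * (1 - Real.sqrt h * τ)) - ‖u 0‖ ^ 2)
        / (∫ τ in (0:ℝ)..δ, ‖u τ‖ ^ 2 * (1 - Real.sqrt h * τ)) ∧
    |((∫ τ in (0:ℝ)..δ,
            (‖deriv u τ‖ ^ 2
              + h / (1 - Real.sqrt h * τ) ^ 2
                * ((m : ℝ) - b / 2 * (1 - Real.sqrt h * τ) ^ 2) ^ 2 * ‖u τ‖ ^ 2)
              * (1 - Real.sqrt h * τ)) - ‖u 0‖ ^ 2)
        / (∫ τ in (0:ℝ)..δ, ‖u τ‖ ^ 2 * (1 - Real.sqrt h * τ))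
      - ((∫ τ in (0:ℝ)..δ, ‖deriv u τ‖ ^ 2 * (1 - Real.sqrt h * τ)) - ‖u 0‖ ^ 2)
        / (∫ τ in (0:ℝ)..δ, ‖u τ‖ ^ 2 * (1 - Real.sqrt h * τ))
      - ((m:ℝ) - b / 2) ^ 2 * h| ≤ ε := by
  have hcu : Continuous u := hu.continuous
  have hcd : Continuous (deriv u) := hu.continuous_deriv (by simp)
  have hwc : Continuous (fun τ : ℝ => 1 - Real.sqrt h * τ) :=
    continuous_const.sub (continuous_const.mul continuous_id)
  have hwne : ∀ τ ∈ Icc (0:ℝ) δ, (1 - Real.sqrt h * τ) ^ 2 ≠ 0 := by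
    intro τ hτ
    have := hwlo τ hτ
    positivity
  -- notation
  set V : ℝ → ℝ := fun τ => h / (1 - Real.sqrt h * τ) ^ 2
      * ((m:ℝ) - b / 2 * (1 - Real.sqrt h * τ) ^ 2) ^ 2 with hVdef
  set q : ℝ → ℝ := fun τ => ‖u τ‖ ^ 2 * (1 - Real.sqrt h * τ) with hqdef
  set a : ℝ → ℝ := fun τ => ‖deriv u τ‖ ^ 2 * (1 - Real.sqrt h * τ) with hadef
  have hqc : Continuous q := (hcu.norm.pow 2).mul hwc
  have hac : Continuous a := (hcd.norm.pow 2).mul hwc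
  have hVcont : ContinuousOn V (Icc (0:ℝ) δ) := by
    apply ContinuousOn.mul
    · exact ContinuousOn.div continuousOn_const ((hwc.pow 2).continuousOn) hwne
    · exact ((continuous_const.sub (continuous_const.mul (hwc.pow 2))).pow 2).continuousOn
  have huicc : uIcc (0:ℝ) δ = Icc 0 δ := uIcc_of_le hδ.le
  have hIq : IntervalIntegrable q volume 0 δ := hqc.intervalIntegrable _ _
  have hIa : IntervalIntegrable a volume 0 δ := hac.intervalIntegrable _ _
  have hIVq : IntervalIntegrable (fun τ => V τ * q τ) volume 0 δ := by
    apply ContinuousOn.intervalIntegrable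
    rw [huicc]
    exact hVcont.mul hqc.continuousOn
  set N := ∫ τ in (0:ℝ)..δ, q τ with hNdef
  set I2 := ∫ τ in (0:ℝ)..δ, V τ * q τ with hI2def
  set E := ((m:ℝ) - b / 2) ^ 2 * h with hEdef
  have hq0 : ∀ τ ∈ Icc (0:ℝ) δ, 0 ≤ q τ := by
    intro τ hτ
    have := hwlo τ hτ
    have : (0:ℝ) ≤ 1 - Real.sqrt h * τ := by linarith
    positivity
  -- split the fiber integral
  have hsplit : (∫ τ in (0:ℝ)..δ,
      (‖deriv u τ‖ ^ 2 + V τ * ‖u τ‖ ^ 2) * (1 - Real.sqrt h * τ))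
      = (∫ τ in (0:ℝ)..δ, a τ) + I2 := by
    rw [hI2def, ← intervalIntegral.integral_add hIa hIVq]
    apply intervalIntegral.integral_congr
    intro τ _
    simp only [hVdef, hqdef, hadef]
    ring
  -- bounds on I2
  have hI2nonneg : 0 ≤ I2 := by
    apply intervalIntegral.integral_nonneg hδ.le
    intro τ hτ
    apply mul_nonneg _ (hq0 τ hτ)
    have h1 := hwlo τ hτ
    have h2 : (0:ℝ) < (1 - Real.sqrt h * τ) ^ 2 := by positivity
    positivity
  have hI2low : (E - ε) * N ≤ I2 := by
    rw [hNdef, ← intervalIntegral.integral_const_mul]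
    apply intervalIntegral.integral_mono_on hδ.le (hIq.const_mul _) hIVq
    intro τ hτ
    have h1 := abs_le.mp (hV τ hτ)
    have h2 := hq0 τ hτ
    have h3 : E - ε ≤ V τ := by rw [hVdef, hEdef]; simp only []; linarith [h1.1]
    exact mul_le_mul_of_nonneg_right h3 h2
  have hI2hi : I2 ≤ (E + ε) * N := by
    rw [hNdef, ← intervalIntegral.integral_const_mul]
    apply intervalIntegral.integral_mono_on hδ.le hIVq (hIq.const_mul _)
    intro τ hτ
    have h1 := abs_le.mp (hV τ hτ)
    have h2 := hq0 τ hτ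
    have h3 : V τ ≤ E + ε := by rw [hVdef, hEdef]; simp only []; linarith [h1.2]
    exact mul_le_mul_of_nonneg_right h3 h2
  -- trace bound
  have htr := trace_ineq u hu δ hδ hud
  have h23 : (2/3) * (∫ τ in (0:ℝ)..δ, ‖deriv u τ‖ ^ 2) ≤ ∫ τ in (0:ℝ)..δ, a τ := by
    rw [← intervalIntegral.integral_const_mul]
    apply intervalIntegral.integral_mono_on hδ.le
      (((hcd.norm.pow 2).intervalIntegrable _ _).const_mul _) hIa
    intro τ hτ
    have h1 := hwlo τ hτ
    simp only [hadef, Pi.pow_apply]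
    nlinarith [sq_nonneg ‖deriv u τ‖]
  have h32 : (3/2) * (∫ τ in (0:ℝ)..δ, ‖u τ‖ ^ 2) ≤ (9/4) * N := by
    rw [hNdef, ← intervalIntegral.integral_const_mul, ← intervalIntegral.integral_const_mul]
    apply intervalIntegral.integral_mono_on hδ.le
      (((hcu.norm.pow 2).intervalIntegrable _ _).const_mul _) (hIq.const_mul _)
    intro τ hτ
    have h1 := hwlo τ hτ
    simp only [hqdef, Pi.pow_apply]
    nlinarith [sq_nonneg ‖u τ‖]
  have hB : ‖u 0‖ ^ 2 ≤ (∫ τ in (0:ℝ)..δ, a τ) + (9/4) * N := by linarith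
  -- first conclusion
  have hNpos : 0 < N := hN
  refine ⟨?_, ?_, ?_⟩
  · rw [le_div_iff₀ hNpos]
    linarith
  · rw [hsplit, div_le_div_iff_of_pos_right hNpos]
    linarith
  · have harr : (∫ τ in (0:ℝ)..δ, a τ) + I2 - ‖u 0‖ ^ 2
        = ((∫ τ in (0:ℝ)..δ, a τ) - ‖u 0‖ ^ 2) + I2 := by ring
    rw [hsplit, harr, add_div]
    rw [add_sub_cancel_left, abs_le]
    constructor
    · have h5 : E - ε ≤ I2 / N := (le_div_iff₀ hNpos).mpr hI2low
      linarith
    · have h5 : I2 / N ≤ E + ε := (div_le_iff₀ hNpos).mpr hI2hi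
      linarith

end FiberLamAux

/-- Uniform comparison of the fiber eigenvalue with the weighted 1D Laplacian: for
`A, b > 0` and `ρ ∈ (1/4,1/2)` there is a constant `C > 0`, independent of `m` and `h`,
such that `|λ₁(𝓗^{b,ρ}_{m,h}) - λ₁(𝓗_h) - (m-b/2)² h| ≤ C h^{1+ρ}` for all `h ∈ (0,1)`
with `h^{1/2-ρ} < 1/3` and all `m ∈ ℤ` with `|m| ≤ A`. -/
theorem fiberLam_compare (A b ρ : ℝ) (hA : 0 < A) (hb : 0 < b)
    (hρ : ρ ∈ Ioo (1 / 4 : ℝ) (1 / 2)) :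
    ∃ C > (0 : ℝ), ∀ h ∈ Ioo (0 : ℝ) 1, h ^ (1 / 2 - ρ) < 1 / 3 →
      ∀ m : ℤ, |(m : ℝ)| ≤ A →
        |fiberLam b ρ h m - lamH ρ h - ((m : ℝ) - b / 2) ^ 2 * h| ≤ C * h ^ (1 + ρ) := by
  refine ⟨(9/2)*(A+b/2)^2, by positivity, ?_⟩
  intro h hh hsm m hm
  obtain ⟨hhp, hh1⟩ := hh
  set δ : ℝ := h ^ (ρ - 1 / 2) with hδdef
  have hδpos : 0 < δ := Real.rpow_pos_of_pos hhp _
  have hsd : Real.sqrt h * δ = h ^ ρ := by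
    rw [Real.sqrt_eq_rpow, hδdef, ← Real.rpow_add hhp]
    norm_num
  have hρle : h ^ ρ ≤ 1/3 :=
    le_of_lt (lt_trans (Real.rpow_lt_rpow_of_exponent_gt hhp hh1 (by linarith [hρ.1])) hsm)
  have hwlo : ∀ τ ∈ Icc (0:ℝ) δ, 2/3 ≤ 1 - Real.sqrt h * τ := by
    rintro τ ⟨hτ0, hτδ⟩
    have h1 : Real.sqrt h * τ ≤ Real.sqrt h * δ :=
      mul_le_mul_of_nonneg_left hτδ (Real.sqrt_nonneg h)
    rw [hsd] at h1
    linarith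
  set ε : ℝ := (9/2)*(A+b/2)^2 * h ^ (1+ρ) with hεdef
  have hεpos : 0 < ε := by
    have := Real.rpow_pos_of_pos hhp (1+ρ)
    positivity
  have hV : ∀ τ ∈ Icc (0:ℝ) δ,
      |h / (1 - Real.sqrt h * τ) ^ 2 * ((m:ℝ) - b / 2 * (1 - Real.sqrt h * τ) ^ 2) ^ 2
        - ((m:ℝ) - b / 2) ^ 2 * h| ≤ ε := by
    rintro τ ⟨hτ0, hτδ⟩
    have hs0 : 0 ≤ Real.sqrt h * τ := mul_nonneg (Real.sqrt_nonneg h) hτ0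
    have hsρ : Real.sqrt h * τ ≤ h ^ ρ := by
      rw [← hsd]; exact mul_le_mul_of_nonneg_left hτδ (Real.sqrt_nonneg h)
    have key := aux_pot A b ((m:ℤ):ℝ) (Real.sqrt h * τ) hb hm hs0 (le_trans hsρ hρle)
    have heq : h / (1 - Real.sqrt h * τ) ^ 2 * ((m:ℝ) - b / 2 * (1 - Real.sqrt h * τ) ^ 2) ^ 2
        - ((m:ℝ) - b / 2) ^ 2 * h
        = h * (1/(1 - Real.sqrt h * τ)^2 * ((m:ℝ) - b/2*(1 - Real.sqrt h * τ)^2)^2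
          - ((m:ℝ) - b/2)^2) := by ring
    rw [heq, abs_mul, abs_of_nonneg hhp.le]
    have h2 : h * |1/(1 - Real.sqrt h * τ)^2 * ((m:ℝ) - b/2*(1 - Real.sqrt h * τ)^2)^2
        - ((m:ℝ) - b/2)^2| ≤ h * ((9/2)*(A+b/2)^2 * (Real.sqrt h * τ)) :=
      mul_le_mul_of_nonneg_left key hhp.le
    have h3 : h * ((9/2)*(A+b/2)^2 * (Real.sqrt h * τ)) ≤ ε := by
      rw [hεdef, Real.rpow_add hhp, Real.rpow_one]
      have h4 : h * (Real.sqrt h * τ) ≤ h * h ^ ρ := mul_le_mul_of_nonneg_left hsρ hhp.le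
      nlinarith [sq_nonneg (A + b/2)]
    linarith
  -- witness
  set u₀ : ℝ → ℂ := fun τ => (δ : ℂ) - (τ : ℂ) with hu₀def
  have hu₀ : ContDiff ℝ (⊤ : ℕ∞) u₀ := contDiff_const.sub Complex.ofRealCLM.contDiff
  have hu₀δ : u₀ δ = 0 := by simp [hu₀def]
  have hN₀ : 0 < ∫ τ in (0:ℝ)..δ, ‖u₀ τ‖ ^ 2 * (1 - Real.sqrt h * τ) := by
    apply intervalIntegral.intervalIntegral_pos_of_pos_on
    · exact ((hu₀.continuous.norm.pow 2).mul
        (continuous_const.sub (continuous_const.mul continuous_id))).intervalIntegrable _ _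
    · rintro x ⟨hx0, hxδ⟩
      have hw := hwlo x ⟨hx0.le, hxδ.le⟩
      have hnorm : ‖u₀ x‖ = |δ - x| := by
        rw [hu₀def]
        simp only []
        rw [← Complex.ofReal_sub, Complex.norm_real, Real.norm_eq_abs]
      have : 0 < ‖u₀ x‖ ^ 2 := by
        rw [hnorm]
        have : δ - x ≠ 0 := by linarith
        positivity
      nlinarith
    · exact hδpos
  unfold fiberLam lamH
  rw [← hδdef]
  have hkey := fun (u : ℝ → ℂ) (hu : ContDiff ℝ (⊤ : ℕ∞) u) (hud : u δ = 0)
      (hN : 0 < ∫ τ in (0:ℝ)..δ, ‖u τ‖ ^ 2 * (1 - Real.sqrt h * τ)) =>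
    aux_elem b h δ ε m hδpos hεpos.le hhp.le hwlo hV u hu hud hN
  set Sf : Set ℝ := { r : ℝ | ∃ u : ℝ → ℂ, ContDiff ℝ (⊤ : ℕ∞) u ∧ u δ = 0 ∧
    0 < (∫ τ in (0 : ℝ)..δ, ‖u τ‖ ^ 2 * (1 - Real.sqrt h * τ)) ∧
    r = ((∫ τ in (0 : ℝ)..δ,
            (‖deriv u τ‖ ^ 2
              + h / (1 - Real.sqrt h * τ) ^ 2
                * ((m : ℝ) - b / 2 * (1 - Real.sqrt h * τ) ^ 2) ^ 2 * ‖u τ‖ ^ 2)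
              * (1 - Real.sqrt h * τ))
          - ‖u 0‖ ^ 2)
        / ∫ τ in (0 : ℝ)..δ, ‖u τ‖ ^ 2 * (1 - Real.sqrt h * τ) } with hSfdef
  set SH : Set ℝ := { r : ℝ | ∃ u : ℝ → ℂ, ContDiff ℝ (⊤ : ℕ∞) u ∧ u δ = 0 ∧
    0 < (∫ τ in (0 : ℝ)..δ, ‖u τ‖ ^ 2 * (1 - Real.sqrt h * τ)) ∧
    r = ((∫ τ in (0 : ℝ)..δ, ‖deriv u τ‖ ^ 2 * (1 - Real.sqrt h * τ))
          - ‖u 0‖ ^ 2)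
        / ∫ τ in (0 : ℝ)..δ, ‖u τ‖ ^ 2 * (1 - Real.sqrt h * τ) } with hSHdef
  have hSfne : Sf.Nonempty := ⟨_, u₀, hu₀, hu₀δ, hN₀, rfl⟩
  have hSHne : SH.Nonempty := ⟨_, u₀, hu₀, hu₀δ, hN₀, rfl⟩
  have hSflb : ∀ r ∈ Sf, -(9/4:ℝ) ≤ r := by
    rintro r ⟨u, hu, hud, hN, rfl⟩
    have k := hkey u hu hud hN
    linarith [k.1, k.2.1]
  have hSHlb : ∀ r ∈ SH, -(9/4:ℝ) ≤ r := by
    rintro r ⟨u, hu, hud, hN, rfl⟩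
    exact (hkey u hu hud hN).1
  have hSfbdd : BddBelow Sf := ⟨-(9/4), hSflb⟩
  have hSHbdd : BddBelow SH := ⟨-(9/4), hSHlb⟩
  have hub : sInf Sf - (((m:ℝ) - b / 2) ^ 2 * h + ε) ≤ sInf SH := by
    apply le_csInf hSHne
    rintro r ⟨u, hu, hud, hN, rfl⟩
    have k := hkey u hu hud hN
    have h5 : sInf Sf ≤ _ := csInf_le hSfbdd (⟨u, hu, hud, hN, rfl⟩ :
      (((∫ τ in (0 : ℝ)..δ,
            (‖deriv u τ‖ ^ 2
              + h / (1 - Real.sqrt h * τ) ^ 2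
                * ((m : ℝ) - b / 2 * (1 - Real.sqrt h * τ) ^ 2) ^ 2 * ‖u τ‖ ^ 2)
              * (1 - Real.sqrt h * τ))
          - ‖u 0‖ ^ 2)
        / ∫ τ in (0 : ℝ)..δ, ‖u τ‖ ^ 2 * (1 - Real.sqrt h * τ)) ∈ Sf)
    have h6 := abs_le.mp k.2.2
    linarith [h6.1, h6.2]
  have hlb : sInf SH + (((m:ℝ) - b / 2) ^ 2 * h - ε) ≤ sInf Sf := by
    apply le_csInf hSfne
    rintro r ⟨u, hu, hud, hN, rfl⟩
    have k := hkey u hu hud hN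
    have h5 : sInf SH ≤ _ := csInf_le hSHbdd (⟨u, hu, hud, hN, rfl⟩ :
      (((∫ τ in (0 : ℝ)..δ, ‖deriv u τ‖ ^ 2 * (1 - Real.sqrt h * τ))
          - ‖u 0‖ ^ 2)
        / ∫ τ in (0 : ℝ)..δ, ‖u τ‖ ^ 2 * (1 - Real.sqrt h * τ)) ∈ SH)
    have h6 := abs_le.mp k.2.2
    linarith [h6.1, h6.2]
  rw [abs_le]
  constructor <;> linarith
end
end
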